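/- arXiv:math/0009170 — 6 statements merged into one kernel-verified Lean document; each statement's English description precedes it below -/
import Mathlib

section
/- Let C be a commutative star ring in which 2 is invertible, A a unital *-algebra over C, P_0 ∈ M_n(A) a projection, E = P_0 A^n with canonical inner product h_0(x,y) = Σ_{i=1}^n x_i* y_i, and qA = (A[[λ]], ⋆) a Hermitian formal deformation of A. Let (E[[λ]], •, h) and (E[[λ]], •', h') be two Hermitian deformations of (E, h_0) corresponding to qA (deformed module structures •, •' together with C[[λ]]-sesquilinear maps h and h' deforming h_0 that satisfy h(x,y)* = h(y,x), h(x, y • a) = h(x,y) ⋆ a, and likewise for h' with •'). Then they are isometrically equivalent: there exist C-linear maps T_r : E → E for r ≥ 1 such that T = id + Σ_{r≥1} T_r λ^r is a bijective qA-module map from (E[[λ]], •) to (E[[λ]], •') satisfying h'(T x, T y) = h(x, y) for all x, y ∈ E[[λ]]. -/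
open scoped Matrix

/-- Cauchy-type convolution of two formal series along a family of
coefficient maps `B r : M → N → P`:  `(x ⋆ y) n = ∑_{r+i+j=n} B r (x i) (y j)`. -/
def fdConv {M N P : Type*} [AddCommMonoid P] (B : ℕ → M → N → P)
    (x : ℕ → M) (y : ℕ → N) : ℕ → P := fun n =>
  ∑ p ∈ Finset.HasAntidiagonal.antidiagonal n, ∑ q ∈ Finset.HasAntidiagonal.antidiagonal p.2, B p.1 (x q.1) (y q.2)

/-- The unit formal series `1 + 0·λ + 0·λ² + ⋯`. -/
def fdOne (A : Type*) [One A] [Zero A] : ℕ → A := fun n => if n = 0 then 1 else 0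

/-- An element viewed as a constant (order-zero) formal series. -/
def fdC {A : Type*} [Zero A] (a : A) : ℕ → A := fun n => if n = 0 then a else 0

/-- Coefficientwise star of a formal series. -/
def fdStar {A : Type*} [Star A] (x : ℕ → A) : ℕ → A := fun n => star (x n)

/-- Action of a scalar series `c ∈ k[[λ]]` on series with coefficients in a `k`-module. -/
def fdSmul {k M : Type*} [Semiring k] [AddCommMonoid M] [Module k M]
    (c : ℕ → k) (x : ℕ → M) : ℕ → M := fun n =>
  ∑ p ∈ Finset.HasAntidiagonal.antidiagonal n, c p.1 • x p.2

/-- Order-by-order extension of a family of maps `T r : E → F` to formal series: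
`(T x) n = ∑_{r+j=n} T r (x j)`. -/
def fdMap {E F : Type*} [AddCommMonoid F] (T : ℕ → E → F) (x : ℕ → E) : ℕ → F :=
  fun n => ∑ p ∈ Finset.HasAntidiagonal.antidiagonal n, T p.1 (x p.2)

/-- A formal deformation (à la Gerstenhaber) of a unital `k`-algebra `A`:
a family of `k`-bilinear cochains `C r` with `C 0` the original product, whose
convolution product on `A[[λ]]` is associative and unital (with the same unit). -/
structure FormalDeformation (k A : Type*) [CommRing k] [Ring A] [Algebra k A] where
  C : ℕ → A →ₗ[k] A →ₗ[k] A
  C_zero : ∀ a b : A, C 0 a b = a * b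
  assoc : ∀ x y z : ℕ → A,
    fdConv (fun r a b => C r a b) (fdConv (fun r a b => C r a b) x y) z =
      fdConv (fun r a b => C r a b) x (fdConv (fun r a b => C r a b) y z)
  one_mul : ∀ x : ℕ → A, fdConv (fun r a b => C r a b) (fdOne A) x = x
  mul_one : ∀ x : ℕ → A, fdConv (fun r a b => C r a b) x (fdOne A) = x

namespace FormalDeformation

variable {k A : Type*} [CommRing k] [Ring A] [Algebra k A]

/-- The deformed product on `A[[λ]]`. -/
def mul (D : FormalDeformation k A) : (ℕ → A) → (ℕ → A) → ℕ → A :=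
  fdConv fun r a b => D.C r a b

/-- A deformation of a `*`-algebra is Hermitian if the coefficientwise extension of
the involution is still an involution for the deformed product. -/
def IsHermitian [StarRing A] (D : FormalDeformation k A) : Prop :=
  ∀ x y : ℕ → A, fdStar (D.mul x y) = D.mul (fdStar y) (fdStar x)

/-- The extension of the deformation cochains to matrices. -/
def matC (D : FormalDeformation k A) (n : ℕ) (r : ℕ)
    (L S : Matrix (Fin n) (Fin n) A) : Matrix (Fin n) (Fin n) A :=
  Matrix.of fun i j => ∑ s, D.C r (L i s) (S s j)

/-- The deformed product on `M_n(A)[[λ]] = M_n(A[[λ]])`. -/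
def matMul (D : FormalDeformation k A) (n : ℕ) :
    (ℕ → Matrix (Fin n) (Fin n) A) → (ℕ → Matrix (Fin n) (Fin n) A) →
      ℕ → Matrix (Fin n) (Fin n) A :=
  fdConv (D.matC n)

/-- The deformed left action of `M_n(A)[[λ]]` on column vectors `A^n[[λ]]`. -/
def mvMul (D : FormalDeformation k A) (n : ℕ) :
    (ℕ → Matrix (Fin n) (Fin n) A) → (ℕ → Fin n → A) → ℕ → Fin n → A :=
  fdConv fun r L v => fun i => ∑ j, D.C r (L i j) (v j)

/-- The deformed right action of `A[[λ]]` on column vectors `A^n[[λ]]`. -/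
def vsMul (D : FormalDeformation k A) (n : ℕ) :
    (ℕ → Fin n → A) → (ℕ → A) → ℕ → Fin n → A :=
  fdConv fun r v a => fun i => D.C r (v i) a

end FormalDeformation

/-- A Hermitian deformation `(E[[λ]], •, h)` of the inner-product right `A`-module
`E = P₀Aⁿ` (with its canonical `A`-valued inner product `h₀(x,y) = ∑ᵢ xᵢ* yᵢ`)
corresponding to a Hermitian deformation `qA = (A[[λ]], ⋆)`:  `C`-bilinear cochains
`R r : E × A → E` with `R 0` the original action, making `E[[λ]]` a unital right
`qA`-module, together with `C`-sesquilinear cochains `h r : E × E → A` with `h 0 = h₀`,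
whose extension to `E[[λ]]` is Hermitian-symmetric and `qA`-linear in the second
argument.  (Membership in `E = P₀Aⁿ` is expressed by `P₀.mulVec x = x`.) -/
structure HermitianDeformedModule {C A : Type*} [CommRing C] [StarRing C]
    [Ring A] [Algebra C A] [StarRing A] [StarModule C A]
    {n : ℕ} (D : FormalDeformation C A) (P₀ : Matrix (Fin n) (Fin n) A) where
  R : ℕ → (Fin n → A) → A → Fin n → A
  h : ℕ → (Fin n → A) → (Fin n → A) → A
  R_zero : ∀ x a, P₀.mulVec x = x → R 0 x a = fun i => x i * a
  R_mem : ∀ r x a, P₀.mulVec x = x → P₀.mulVec (R r x a) = R r x a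
  R_add_left : ∀ r x x' a, P₀.mulVec x = x → P₀.mulVec x' = x' →
    R r (x + x') a = R r x a + R r x' a
  R_add_right : ∀ r x a a', P₀.mulVec x = x → R r x (a + a') = R r x a + R r x a'
  R_smul_left : ∀ r (c : C) x a, P₀.mulVec x = x → R r (c • x) a = c • R r x a
  R_smul_right : ∀ r (c : C) x a, P₀.mulVec x = x → R r x (c • a) = c • R r x a
  act_one : ∀ x : ℕ → Fin n → A, (∀ m, P₀.mulVec (x m) = x m) →
    fdConv R x (fdOne A) = x
  act_assoc : ∀ (x : ℕ → Fin n → A) (a b : ℕ → A), (∀ m, P₀.mulVec (x m) = x m) →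
    fdConv R (fdConv R x a) b = fdConv R x (D.mul a b)
  h_zero : ∀ x y, P₀.mulVec x = x → P₀.mulVec y = y →
    h 0 x y = ∑ i, star (x i) * y i
  h_add_left : ∀ r x x' y, P₀.mulVec x = x → P₀.mulVec x' = x' → P₀.mulVec y = y →
    h r (x + x') y = h r x y + h r x' y
  h_add_right : ∀ r x y y', P₀.mulVec x = x → P₀.mulVec y = y → P₀.mulVec y' = y' →
    h r x (y + y') = h r x y + h r x y'
  h_smul_left : ∀ r (c : C) x y, P₀.mulVec x = x → P₀.mulVec y = y →
    h r (c • x) y = star c • h r x y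
  h_smul_right : ∀ r (c : C) x y, P₀.mulVec x = x → P₀.mulVec y = y →
    h r x (c • y) = c • h r x y
  h_herm : ∀ x y : ℕ → Fin n → A, (∀ m, P₀.mulVec (x m) = x m) →
    (∀ m, P₀.mulVec (y m) = y m) → fdStar (fdConv h x y) = fdConv h y x
  h_mod : ∀ (x y : ℕ → Fin n → A) (a : ℕ → A), (∀ m, P₀.mulVec (x m) = x m) →
    (∀ m, P₀.mulVec (y m) = y m) →
    fdConv h x (fdConv R y a) = D.mul (fdConv h x y) a



/-!
The isometry `T = id + ∑ T_r λ^r` is built one order at a time. Suppose `T_0, …, T_m` make `T`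
a module map and an isometry modulo `λ^(m+1)`. Associativity of the two deformed actions shows
that the order-`(m+1)` failure `d(x, a)` of `T (x • a) = T x •' a` is a Hochschild 1-cocycle:
`d(x, ab) = d(xa, b) + d(x, a) b`. As `E = P₀ Aⁿ` is projective, it is a coboundary:
`u(x) = -∑ⱼ d(ξⱼ, xⱼ)`, with `ξⱼ` the columns of `P₀`, satisfies `u(xa) - u(x) a = -d(x, a)`,
so adding `u` to `T_(m+1)` repairs the module property. The order-`(m+1)` failure `e(x, y)` of
the isometry property is then Hermitian and right `A`-linear, so `B(x)ᵢ = -½ e(ξᵢ, x)` is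
`A`-linear, maps into `E` (because `P₀` is Hermitian) and satisfies
`h₀(Bx, y) + h₀(x, By) = -e(x, y)`; adding `B` as well repairs the isometry property. Finally
`T_0 = id` makes `T` bijective on `E[[λ]]`.

The cocycle identity for `d` and the symmetry and linearity of `e` are identities between
formal series, read off on constant series.
-/

open Finset
open scoped RightActions

namespace Finset.Nat

variable {β : Type*} [AddCommMonoid β]

theorem sum_antidiagonal_antidiagonal_assoc (f : ℕ → ℕ → ℕ → β) (n : ℕ) :
    ∑ p ∈ antidiagonal n, ∑ q ∈ antidiagonal p.2, f p.1 q.1 q.2 =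
      ∑ p ∈ antidiagonal n, ∑ q ∈ antidiagonal p.1, f q.1 q.2 p.2 := by
  simp only [sum_sigma']
  refine sum_nbij' (fun x => ⟨(x.1.1 + x.2.1, x.2.2), (x.1.1, x.2.1)⟩)
    (fun x => ⟨(x.2.1, x.2.2 + x.1.2), (x.2.2, x.1.2)⟩) ?_ ?_ ?_ ?_ (fun _ _ => rfl) <;>
    rintro ⟨⟨a, b⟩, ⟨c, d⟩⟩ h <;>
    simp only [mem_sigma, HasAntidiagonal.mem_antidiagonal, and_true] at h ⊢
  · omega
  · omega
  · obtain ⟨-, rfl⟩ := h; rfl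
  · obtain ⟨-, rfl⟩ := h; rfl

theorem sum_antidiagonal_antidiagonal_comm (f : ℕ → ℕ → ℕ → β) (n : ℕ) :
    ∑ p ∈ antidiagonal n, ∑ q ∈ antidiagonal p.2, f p.1 q.1 q.2 =
      ∑ p ∈ antidiagonal n, ∑ q ∈ antidiagonal p.2, f q.1 p.1 q.2 := by
  rw [sum_antidiagonal_antidiagonal_assoc,
    sum_antidiagonal_antidiagonal_assoc (fun a b c => f b a c)]
  exact sum_congr rfl fun p _ => sum_antidiagonal_swap (f := fun q => f q.2 q.1 p.2)

theorem sum_antidiagonal_eq_of_fst_ne_zero {f : ℕ × ℕ → β} {n : ℕ}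
    (h : ∀ p ∈ antidiagonal n, p.1 ≠ 0 → f p = 0) : ∑ p ∈ antidiagonal n, f p = f (0, n) := by
  refine sum_eq_single_of_mem _ (by simp) fun p hp hne => h p hp fun h0 => hne ?_
  rw [HasAntidiagonal.mem_antidiagonal] at hp
  ext <;> simp only <;> omega

theorem sum_antidiagonal_eq_of_snd_ne_zero {f : ℕ × ℕ → β} {n : ℕ}
    (h : ∀ p ∈ antidiagonal n, p.2 ≠ 0 → f p = 0) : ∑ p ∈ antidiagonal n, f p = f (n, 0) := by
  rw [← sum_antidiagonal_swap]
  exact sum_antidiagonal_eq_of_fst_ne_zero fun p hp =>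
    h p.swap (HasAntidiagonal.swap_mem_antidiagonal.2 hp)

theorem antidiagonal.fst_lt_of_snd_ne_zero {n : ℕ} {p : ℕ × ℕ} (hp : p ∈ antidiagonal n)
    (h : p.2 ≠ 0) : p.1 < n := by
  rw [HasAntidiagonal.mem_antidiagonal] at hp
  omega

theorem antidiagonal.snd_lt_of_fst_ne_zero {n : ℕ} {p : ℕ × ℕ} (hp : p ∈ antidiagonal n)
    (h : p.1 ≠ 0) : p.2 < n := by
  rw [HasAntidiagonal.mem_antidiagonal] at hp
  omega

end Finset.Nat

section Series

variable {R : Type*} [CommSemiring R] {σ : R →+* R}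
  {M N P M' N' : Type*} [AddCommMonoid M] [AddCommMonoid N] [AddCommMonoid P]
  [AddCommMonoid M'] [AddCommMonoid N'] [Module R M] [Module R N] [Module R P] [Module R M']
  [Module R N'] (B : ℕ → M →ₛₗ[σ] N →ₗ[R] P)

theorem fdConv_fdC_left (u : M) (y : ℕ → N) (k : ℕ) :
    fdConv (fun r u v => B r u v) (fdC u) y k = ∑ p ∈ antidiagonal k, B p.1 u (y p.2) := by
  refine sum_congr rfl fun p _ => ?_
  rw [Nat.sum_antidiagonal_eq_of_fst_ne_zero] <;> simp +contextual [fdC]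

theorem fdConv_fdC_right (x : ℕ → M) (v : N) (k : ℕ) :
    fdConv (fun r u v => B r u v) x (fdC v) k = ∑ p ∈ antidiagonal k, B p.1 (x p.2) v := by
  refine sum_congr rfl fun p _ => ?_
  rw [Nat.sum_antidiagonal_eq_of_snd_ne_zero] <;> simp +contextual [fdC]

theorem fdConv_fdC_fdC (u : M) (v : N) :
    fdConv (fun r u v => B r u v) (fdC u) (fdC v) = fun k => B k u v := by
  ext k
  rw [fdConv_fdC_left, Nat.sum_antidiagonal_eq_of_snd_ne_zero] <;> simp +contextual [fdC]

theorem fdMap_fdC (T : ℕ → M →ₗ[R] N) (u : M) :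
    fdMap (fun r => T r) (fdC u) = fun k => T k u := by
  ext k
  rw [fdMap, Nat.sum_antidiagonal_eq_of_snd_ne_zero] <;> simp +contextual [fdC]

theorem fdConv_eq_zero_of_forall_le (x : ℕ → M) {z : ℕ → N} {n : ℕ}
    (hz : ∀ k ≤ n, z k = 0) : fdConv (fun r u v => B r u v) x z n = 0 := by
  refine sum_eq_zero fun p hp => sum_eq_zero fun q hq => ?_
  dsimp only
  rw [hz q.2 ((HasAntidiagonal.antidiagonal.snd_le hq).trans
    (HasAntidiagonal.antidiagonal.snd_le hp)), map_zero]

theorem fdConv_fdMap_left (S : ℕ → M' →ₗ[R] M) (x : ℕ → M') (y : ℕ → N) :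
    fdConv (fun r u v => B r u v) (fdMap (fun r => S r) x) y =
      fdConv (fun t u v => (∑ p ∈ antidiagonal t, (B p.1).comp (S p.2)) u v) x y := by
  ext n
  simp only [fdConv, fdMap, map_sum, LinearMap.sum_apply, LinearMap.comp_apply]
  calc _ = ∑ p ∈ antidiagonal n, ∑ q ∈ antidiagonal p.2, ∑ r ∈ antidiagonal q.2,
        B p.1 (S q.1 (x r.1)) (y r.2) := sum_congr rfl fun p _ =>
          (Nat.sum_antidiagonal_antidiagonal_assoc (fun a b c => B p.1 (S a (x b)) (y c)) _).symm
    _ = _ := by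
      rw [Nat.sum_antidiagonal_antidiagonal_assoc
        (fun a b c => ∑ r ∈ antidiagonal c, B a (S b (x r.1)) (y r.2))]
      exact sum_congr rfl fun p _ => sum_comm

theorem fdConv_fdMap_right (T : ℕ → N' →ₗ[R] N) (x : ℕ → M) (y : ℕ → N') :
    fdConv (fun r u v => B r u v) x (fdMap (fun r => T r) y) =
      fdConv (fun t u v => (∑ p ∈ antidiagonal t, (B p.1).compl₂ (T p.2)) u v) x y := by
  ext n
  simp only [fdConv, fdMap, map_sum, LinearMap.sum_apply, LinearMap.compl₂_apply]
  calc _ = ∑ p ∈ antidiagonal n, ∑ q ∈ antidiagonal p.2, ∑ r ∈ antidiagonal q.2,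
        B p.1 (x r.1) (T q.1 (y r.2)) := sum_congr rfl fun p _ =>
          Nat.sum_antidiagonal_antidiagonal_comm (fun a b c => B p.1 (x a) (T b (y c))) _
    _ = _ := by
      rw [Nat.sum_antidiagonal_antidiagonal_assoc
        (fun a b c => ∑ r ∈ antidiagonal c, B a (x r.1) (T b (y r.2)))]
      exact sum_congr rfl fun p _ => sum_comm

theorem fdMap_fdConv {Q : Type*} [AddCommMonoid Q] [Module R Q] (B : ℕ → M →ₗ[R] N →ₗ[R] P)
    (T : ℕ → P →ₗ[R] Q) (x : ℕ → M) (y : ℕ → N) :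
    fdMap (fun r => T r) (fdConv (fun r u v => B r u v) x y) =
      fdConv (fun t u v => (∑ p ∈ antidiagonal t, (B p.2).compr₂ (T p.1)) u v) x y := by
  ext n
  simp only [fdConv, fdMap, map_sum, LinearMap.sum_apply, LinearMap.compr₂_apply]
  rw [Nat.sum_antidiagonal_antidiagonal_assoc
    (fun a b c => ∑ r ∈ antidiagonal c, T a (B b (x r.1) (y r.2)))]
  exact sum_congr rfl fun p _ => sum_comm

end Series

section SeriesGroup

variable {R : Type*} [CommSemiring R] {σ : R →+* R}
  {M N P : Type*} [AddCommGroup M] [AddCommMonoid N] [AddCommGroup P]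
  [Module R M] [Module R N] [Module R P] (B : ℕ → M →ₛₗ[σ] N →ₗ[R] P)

theorem fdConv_sub {X Y : Type*} (F G : ℕ → X → Y → P) (x : ℕ → X) (y : ℕ → Y) :
    fdConv (fun r u v => F r u v - G r u v) x y = fdConv F x y - fdConv G x y := by
  ext n
  simp only [fdConv, Pi.sub_apply, sum_sub_distrib]

theorem fdConv_sub_left (x x' : ℕ → M) (y : ℕ → N) :
    fdConv (fun r u v => B r u v) (x - x') y =
      fdConv (fun r u v => B r u v) x y - fdConv (fun r u v => B r u v) x' y := by
  ext n
  simp only [fdConv, Pi.sub_apply, map_sub, LinearMap.sub_apply, sum_sub_distrib]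

theorem fdConv_add_right (x : ℕ → M) (y y' : ℕ → N) :
    fdConv (fun r u v => B r u v) x (y + y') =
      fdConv (fun r u v => B r u v) x y + fdConv (fun r u v => B r u v) x y' := by
  ext n
  simp only [fdConv, Pi.add_apply, map_add, sum_add_distrib]

theorem fdStar_sub {A : Type*} [AddGroup A] [StarAddMonoid A] (x y : ℕ → A) :
    fdStar (x - y) = fdStar x - fdStar y :=
  funext fun n => star_sub (x n) (y n)

end SeriesGroup

section Unitriangular

variable {M : Type*}

theorem fdMap_succ [AddCommMonoid M] (T : ℕ → M → M) (x : ℕ → M) (n : ℕ) :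
    fdMap T x (n + 1) = T 0 (x (n + 1)) + ∑ p ∈ antidiagonal n, T (p.1 + 1) (x p.2) :=
  Nat.sum_antidiagonal_succ

theorem fdMap_mem [AddCommMonoid M] {S : Type*} [SetLike S M] [AddSubmonoidClass S M] {s : S}
    {T : ℕ → M → M} (hT : ∀ k, ∀ u ∈ s, T k u ∈ s) {x : ℕ → M} (hx : ∀ k, x k ∈ s) (n : ℕ) :
    fdMap T x n ∈ s :=
  sum_mem fun _ _ => hT _ _ (hx _)

theorem fdMap_injective [AddCommMonoid M] [IsRightCancelAdd M] {T : ℕ → M → M}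
    (h0 : ∀ u, T 0 u = u) : Function.Injective (fdMap T) := by
  intro x y hxy
  ext n
  induction n using Nat.strong_induction_on with
  | _ n ih =>
    cases n with
    | zero => simpa [fdMap, h0] using congrFun hxy 0
    | succ n =>
      have hn := congrFun hxy (n + 1)
      rw [fdMap_succ, fdMap_succ, h0, h0, sum_congr rfl fun p hp => congrArg (T (p.1 + 1))
        (ih p.2 (Nat.lt_succ_of_le (HasAntidiagonal.antidiagonal.snd_le hp)))] at hn
      exact add_right_cancel hn

def fdMapInv [AddCommGroup M] (T : ℕ → M → M) (y : ℕ → M) : ℕ → M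
  | 0 => y 0
  | n + 1 => y (n + 1) - ∑ p ∈ (antidiagonal n).attach, T (p.1.1 + 1) (fdMapInv T y p.1.2)
decreasing_by exact Nat.lt_succ_of_le (HasAntidiagonal.antidiagonal.snd_le p.2)

theorem fdMap_fdMapInv [AddCommGroup M] {T : ℕ → M → M} (h0 : ∀ u, T 0 u = u) (y : ℕ → M) :
    fdMap T (fdMapInv T y) = y := by
  ext n
  cases n with
  | zero => simp [fdMap, fdMapInv, h0]
  | succ n =>
    rw [fdMap_succ, h0, fdMapInv, sum_attach (antidiagonal n)
      (fun p => T (p.1 + 1) (fdMapInv T y p.2)), sub_add_cancel]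

theorem fdMapInv_mem [AddCommGroup M] {S : Type*} [SetLike S M] [AddSubgroupClass S M] {s : S}
    {T : ℕ → M → M} (hT : ∀ k, ∀ u ∈ s, T k u ∈ s) {y : ℕ → M} (hy : ∀ k, y k ∈ s) (n : ℕ) :
    fdMapInv T y n ∈ s := by
  induction n using Nat.strong_induction_on with
  | _ n ih =>
    cases n with
    | zero => simpa [fdMapInv] using hy 0
    | succ n =>
      rw [fdMapInv]
      exact sub_mem (hy _) (sum_mem fun p _ => hT _ _
        (ih _ (Nat.lt_succ_of_le (HasAntidiagonal.antidiagonal.snd_le p.2))))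

end Unitriangular

section FixedVectors

variable (C : Type*) {A : Type*} [CommSemiring C] [Semiring A] [Algebra C A] {n : ℕ}

def Matrix.fixedSubmodule (P : Matrix (Fin n) (Fin n) A) : Submodule C (Fin n → A) where
  carrier := {x | P *ᵥ x = x}
  add_mem' hx hy := by simp_all [Matrix.mulVec_add]
  zero_mem' := Matrix.mulVec_zero P
  smul_mem' c x hx := by simp_all [Matrix.mulVec_smul]

variable {C} {P : Matrix (Fin n) (Fin n) A}

theorem Matrix.mem_fixedSubmodule {x : Fin n → A} : x ∈ P.fixedSubmodule C ↔ P *ᵥ x = x :=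
  Iff.rfl

theorem Matrix.mulVec_mulVec_of_mul_self (hP : P * P = P) (x : Fin n → A) :
    P *ᵥ (P *ᵥ x) = P *ᵥ x := by
  rw [mulVec_mulVec, hP]

theorem Matrix.mulVec_mem_fixedSubmodule (hP : P * P = P) (x : Fin n → A) :
    P *ᵥ x ∈ P.fixedSubmodule C :=
  mulVec_mulVec_of_mul_self hP x

theorem Matrix.transpose_apply_mem_fixedSubmodule (hP : P * P = P) (j : Fin n) :
    Pᵀ j ∈ P.fixedSubmodule C := by
  simpa [col] using mulVec_mem_fixedSubmodule (C := C) hP (Pi.single j 1)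

end FixedVectors

namespace HermitianDeformedModule

open Matrix

variable {C A : Type*} [CommRing C] [StarRing C] [Ring A] [Algebra C A] [StarRing A]
  [StarModule C A] {n : ℕ} {D : FormalDeformation C A} {P₀ : Matrix (Fin n) (Fin n) A}
  (M : HermitianDeformedModule D P₀) (hP : P₀ * P₀ = P₀)

/-- `R r` extended from `E = P₀ Aⁿ` to all of `Aⁿ` through the projection `P₀`, so that it
becomes bilinear and the module axioms hold for all series. -/
def act (r : ℕ) : (Fin n → A) →ₗ[C] A →ₗ[C] Fin n → A :=
  LinearMap.mk₂ C (fun x a => M.R r (P₀ *ᵥ x) a)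
    (fun x x' a => by
      rw [mulVec_add, M.R_add_left r _ _ a (mulVec_mulVec_of_mul_self hP x)
        (mulVec_mulVec_of_mul_self hP x')])
    (fun c x a => by rw [mulVec_smul, M.R_smul_left r c _ a (mulVec_mulVec_of_mul_self hP x)])
    (fun x a a' => M.R_add_right r _ a a' (mulVec_mulVec_of_mul_self hP x))
    (fun c x a => M.R_smul_right r c _ a (mulVec_mulVec_of_mul_self hP x))

def form (r : ℕ) : (Fin n → A) →ₗ⋆[C] (Fin n → A) →ₗ[C] A :=
  LinearMap.mk₂'ₛₗ (starRingEnd C) (RingHom.id C) (fun x y => M.h r (P₀ *ᵥ x) (P₀ *ᵥ y))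
    (fun x x' y => by
      rw [mulVec_add, M.h_add_left r _ _ _ (mulVec_mulVec_of_mul_self hP x)
        (mulVec_mulVec_of_mul_self hP x') (mulVec_mulVec_of_mul_self hP y)])
    (fun c x y => by
      rw [mulVec_smul, M.h_smul_left r c _ _ (mulVec_mulVec_of_mul_self hP x)
        (mulVec_mulVec_of_mul_self hP y), starRingEnd_apply])
    (fun x y y' => by
      rw [mulVec_add, M.h_add_right r _ _ _ (mulVec_mulVec_of_mul_self hP x)
        (mulVec_mulVec_of_mul_self hP y) (mulVec_mulVec_of_mul_self hP y')])
    (fun c x y => by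
      rw [mulVec_smul, M.h_smul_right r c _ _ (mulVec_mulVec_of_mul_self hP x)
        (mulVec_mulVec_of_mul_self hP y), RingHom.id_apply])

theorem fdConv_R_eq_act {x : ℕ → Fin n → A} (hx : ∀ k, x k ∈ P₀.fixedSubmodule C)
    (a : ℕ → A) : fdConv M.R x a = fdConv (fun r u v => M.act hP r u v) x a := by
  ext N : 1
  refine sum_congr rfl fun p _ => sum_congr rfl fun q _ => ?_
  simp [act, (mem_fixedSubmodule).1 (hx q.1)]

theorem fdConv_h_eq_form {x y : ℕ → Fin n → A} (hx : ∀ k, x k ∈ P₀.fixedSubmodule C)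
    (hy : ∀ k, y k ∈ P₀.fixedSubmodule C) :
    fdConv M.h x y = fdConv (fun r u v => M.form hP r u v) x y := by
  ext N : 1
  refine sum_congr rfl fun p _ => sum_congr rfl fun q _ => ?_
  simp [form, (mem_fixedSubmodule).1 (hx q.1), (mem_fixedSubmodule).1 (hy q.2)]

variable {M hP}

theorem act_mem (r : ℕ) (x : Fin n → A) (a : A) : M.act hP r x a ∈ P₀.fixedSubmodule C :=
  M.R_mem r _ a (mulVec_mulVec_of_mul_self hP x)

theorem act_zero_of_mem {x : Fin n → A} (hx : x ∈ P₀.fixedSubmodule C) (a : A) :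
    M.act hP 0 x a = x <• a := by
  change M.R 0 (P₀ *ᵥ x) a = _
  rw [(mem_fixedSubmodule).1 hx]
  exact M.R_zero x a hx

theorem form_zero_of_mem {x y : Fin n → A} (hx : x ∈ P₀.fixedSubmodule C)
    (hy : y ∈ P₀.fixedSubmodule C) : M.form hP 0 x y = ∑ i, star (x i) * y i := by
  change M.h 0 (P₀ *ᵥ x) (P₀ *ᵥ y) = _
  rw [(mem_fixedSubmodule).1 hx, (mem_fixedSubmodule).1 hy]
  exact M.h_zero x y hx hy

theorem fdConv_act_mem (x : ℕ → Fin n → A) (a : ℕ → A) (k : ℕ) :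
    fdConv (fun r u v => M.act hP r u v) x a k ∈ P₀.fixedSubmodule C :=
  sum_mem fun _ _ => sum_mem fun _ _ => act_mem _ _ _

theorem fdConv_act_assoc (x : ℕ → Fin n → A) (a b : ℕ → A) :
    fdConv (fun r u v => M.act hP r u v) (fdConv (fun r u v => M.act hP r u v) x a) b =
      fdConv (fun r u v => M.act hP r u v) x (D.mul a b) := by
  calc _ = fdConv M.R (fdConv M.R (fun k => P₀ *ᵥ x k) a) b := by
        rw [← M.fdConv_R_eq_act hP (fdConv_act_mem x a)]
        rfl
    _ = _ := M.act_assoc _ a b fun k => mulVec_mulVec_of_mul_self hP (x k)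

theorem fdStar_fdConv_form (x y : ℕ → Fin n → A) :
    fdStar (fdConv (fun r u v => M.form hP r u v) x y) =
      fdConv (fun r u v => M.form hP r u v) y x :=
  M.h_herm _ _ (fun k => mulVec_mulVec_of_mul_self hP (x k))
    fun k => mulVec_mulVec_of_mul_self hP (y k)

theorem fdConv_form_act (x y : ℕ → Fin n → A) (a : ℕ → A) :
    fdConv (fun r u v => M.form hP r u v) x (fdConv (fun r u v => M.act hP r u v) y a) =
      D.mul (fdConv (fun r u v => M.form hP r u v) x y) a := by
  calc _ = fdConv M.h (fun k => P₀ *ᵥ x k) (fdConv M.R (fun k => P₀ *ᵥ y k) a) := by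
        change fdConv M.h (fun k => P₀ *ᵥ x k)
          (fun k => P₀ *ᵥ fdConv (fun r u v => M.act hP r u v) y a k) = _
        simp_rw [(mem_fixedSubmodule).1 (fdConv_act_mem y a _)]
        rfl
    _ = _ := M.h_mod _ _ a (fun k => mulVec_mulVec_of_mul_self hP (x k))
      fun k => mulVec_mulVec_of_mul_self hP (y k)

end HermitianDeformedModule

section Defects

variable {C A : Type*} [CommRing C] [StarRing C] [Ring A] [Algebra C A] [StarRing A]
  [StarModule C A] {n : ℕ} {D : FormalDeformation C A} {P₀ : Matrix (Fin n) (Fin n) A}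
  (M M' : HermitianDeformedModule D P₀) (hP : P₀ * P₀ = P₀)
  (T : ℕ → (Fin n → A) →ₗ[C] Fin n → A)

def modDefect (t : ℕ) : (Fin n → A) →ₗ[C] A →ₗ[C] Fin n → A :=
  ∑ p ∈ antidiagonal t, (M.act hP p.2).compr₂ (T p.1) -
    ∑ p ∈ antidiagonal t, (M'.act hP p.1).comp (T p.2)

def isoDefect (t : ℕ) : (Fin n → A) →ₗ⋆[C] (Fin n → A) →ₗ[C] A :=
  ∑ q ∈ antidiagonal t, (∑ p ∈ antidiagonal q.1, (M'.form hP p.1).comp (T p.2)).compl₂ (T q.2) -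
    M.form hP t

theorem modDefect_apply (t : ℕ) (x : Fin n → A) (a : A) :
    modDefect M M' hP T t x a = ∑ p ∈ antidiagonal t, T p.1 (M.act hP p.2 x a) -
      ∑ p ∈ antidiagonal t, M'.act hP p.1 (T p.2 x) a := by
  simp [modDefect, LinearMap.sum_apply]

theorem isoDefect_apply (t : ℕ) (x y : Fin n → A) :
    isoDefect M M' hP T t x y = ∑ q ∈ antidiagonal t, ∑ p ∈ antidiagonal q.1,
      M'.form hP p.1 (T p.2 x) (T q.2 y) - M.form hP t x y := by
  simp [isoDefect, LinearMap.sum_apply]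

theorem fdConv_modDefect (x : ℕ → Fin n → A) (a : ℕ → A) :
    fdConv (fun r u v => modDefect M M' hP T r u v) x a =
      fdMap (fun r => T r) (fdConv (fun r u v => M.act hP r u v) x a) -
        fdConv (fun r u v => M'.act hP r u v) (fdMap (fun r => T r) x) a := by
  rw [fdMap_fdConv, fdConv_fdMap_left, ← fdConv_sub]
  simp only [modDefect, LinearMap.sub_apply]

theorem fdConv_isoDefect (x y : ℕ → Fin n → A) :
    fdConv (fun r u v => isoDefect M M' hP T r u v) x y =
      fdConv (fun r u v => M'.form hP r u v) (fdMap (fun r => T r) x)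
          (fdMap (fun r => T r) y) -
        fdConv (fun r u v => M.form hP r u v) x y := by
  rw [fdConv_fdMap_left, fdConv_fdMap_right, ← fdConv_sub]
  simp only [isoDefect, LinearMap.sub_apply]

variable {M M' hP T}

theorem modDefect_mem (hT : ∀ k, ∀ x ∈ P₀.fixedSubmodule C, T k x ∈ P₀.fixedSubmodule C)
    (t : ℕ) (x : Fin n → A) (a : A) : modDefect M M' hP T t x a ∈ P₀.fixedSubmodule C := by
  rw [modDefect_apply]
  exact sub_mem (sum_mem fun _ _ => hT _ _ (M.act_mem _ _ _)) (sum_mem fun _ _ => M'.act_mem _ _ _)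

theorem fdConv_modDefect_mul (x : ℕ → Fin n → A) (a b : ℕ → A) :
    fdConv (fun r u v => modDefect M M' hP T r u v) x (D.mul a b) =
      fdConv (fun r u v => modDefect M M' hP T r u v)
          (fdConv (fun r u v => M.act hP r u v) x a) b +
        fdConv (fun r u v => M'.act hP r u v)
          (fdConv (fun r u v => modDefect M M' hP T r u v) x a) b := by
  rw [fdConv_modDefect, fdConv_modDefect, fdConv_modDefect, fdConv_sub_left,
    ← M.fdConv_act_assoc, ← M'.fdConv_act_assoc]
  abel

theorem modDefect_mul (hT : ∀ k, ∀ x ∈ P₀.fixedSubmodule C, T k x ∈ P₀.fixedSubmodule C)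
    {N : ℕ} (hlow : ∀ t < N, ∀ x ∈ P₀.fixedSubmodule C, ∀ a, modDefect M M' hP T t x a = 0)
    {x : Fin n → A} (hx : x ∈ P₀.fixedSubmodule C) (a b : A) :
    modDefect M M' hP T N x (a * b) =
      modDefect M M' hP T N (x <• a) b + modDefect M M' hP T N x a <• b := by
  have key := congrFun (fdConv_modDefect_mul (M := M) (M' := M') (hP := hP) (T := T)
    (fdC x) (fdC a) (fdC b)) N
  simp only [FormalDeformation.mul, fdConv_fdC_fdC, fdConv_fdC_left, fdConv_fdC_right,
    Pi.add_apply] at key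
  rwa [Nat.sum_antidiagonal_eq_of_snd_ne_zero, Nat.sum_antidiagonal_eq_of_snd_ne_zero,
    Nat.sum_antidiagonal_eq_of_fst_ne_zero, D.C_zero, M.act_zero_of_mem hx,
    M'.act_zero_of_mem (modDefect_mem hT N x a)] at key
  · intro p hp h
    rw [hlow p.2 (Nat.antidiagonal.snd_lt_of_fst_ne_zero hp h) x hx, map_zero,
      LinearMap.zero_apply]
  · exact fun p hp h => hlow p.1 (Nat.antidiagonal.fst_lt_of_snd_ne_zero hp h) _
      (M.act_mem _ _ _) b
  · exact fun p hp h => hlow p.1 (Nat.antidiagonal.fst_lt_of_snd_ne_zero hp h) x hx _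

theorem fdConv_isoDefect_act (x y : ℕ → Fin n → A) (a : ℕ → A) :
    fdConv (fun r u v => isoDefect M M' hP T r u v) x
        (fdConv (fun r u v => M.act hP r u v) y a) =
      D.mul (fdConv (fun r u v => isoDefect M M' hP T r u v) x y) a +
        fdConv (fun r u v => M'.form hP r u v) (fdMap (fun r => T r) x)
          (fdConv (fun r u v => modDefect M M' hP T r u v) y a) := by
  have hTy : fdMap (fun r => T r) (fdConv (fun r u v => M.act hP r u v) y a) =
      fdConv (fun r u v => M'.act hP r u v) (fdMap (fun r => T r) y) a +
        fdConv (fun r u v => modDefect M M' hP T r u v) y a := by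
    rw [fdConv_modDefect]
    abel
  rw [fdConv_isoDefect, fdConv_isoDefect, hTy, fdConv_add_right, M'.fdConv_form_act,
    M.fdConv_form_act, FormalDeformation.mul, fdConv_sub_left]
  abel

theorem isoDefect_op_smul {N : ℕ}
    (hmod : ∀ t ≤ N, ∀ x ∈ P₀.fixedSubmodule C, ∀ a, modDefect M M' hP T t x a = 0)
    (hiso : ∀ t < N, ∀ x ∈ P₀.fixedSubmodule C, ∀ y ∈ P₀.fixedSubmodule C,
      isoDefect M M' hP T t x y = 0)
    {x y : Fin n → A} (hx : x ∈ P₀.fixedSubmodule C) (hy : y ∈ P₀.fixedSubmodule C) (a : A) :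
    isoDefect M M' hP T N x (y <• a) = isoDefect M M' hP T N x y * a := by
  have key := congrFun (fdConv_isoDefect_act (M := M) (M' := M') (hP := hP) (T := T)
    (fdC x) (fdC y) (fdC a)) N
  simp only [FormalDeformation.mul, fdConv_fdC_fdC, fdConv_fdC_left, fdConv_fdC_right,
    fdMap_fdC, Pi.add_apply, fdConv_eq_zero_of_forall_le _ _ fun k hk => hmod k hk y hy a,
    add_zero] at key
  rwa [Nat.sum_antidiagonal_eq_of_snd_ne_zero, Nat.sum_antidiagonal_eq_of_fst_ne_zero, D.C_zero,
    M.act_zero_of_mem hy] at key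
  · intro p hp h
    rw [hiso p.2 (Nat.antidiagonal.snd_lt_of_fst_ne_zero hp h) x hx y hy, map_zero,
      LinearMap.zero_apply]
  · exact fun p hp h => hiso p.1 (Nat.antidiagonal.fst_lt_of_snd_ne_zero hp h) x hx _
      (M.act_mem _ _ _)

theorem star_isoDefect (t : ℕ) (x y : Fin n → A) :
    star (isoDefect M M' hP T t x y) = isoDefect M M' hP T t y x := by
  have key : fdStar (fdConv (fun r u v => isoDefect M M' hP T r u v) (fdC x) (fdC y)) =
      fdConv (fun r u v => isoDefect M M' hP T r u v) (fdC y) (fdC x) := by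
    rw [fdConv_isoDefect, fdConv_isoDefect, fdStar_sub, M'.fdStar_fdConv_form,
      M.fdStar_fdConv_form]
  simpa only [fdConv_fdC_fdC, fdStar] using congrFun key t

end Defects

theorem star_invOf_two {R : Type*} [Semiring R] [StarRing R] [Invertible (2 : R)] :
    star (⅟2 : R) = ⅟2 := by
  simp [star_invOf]

section Corrections

variable {C A : Type*} [CommRing C] [Ring A] [Algebra C A] {n : ℕ}
  (P₀ : Matrix (Fin n) (Fin n) A)

def cocycleCorrection (d : (Fin n → A) →ₗ[C] A →ₗ[C] Fin n → A) :
    (Fin n → A) →ₗ[C] Fin n → A :=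
  -∑ j, (d (P₀ᵀ j)).comp (LinearMap.proj j)

variable {P₀} {d : (Fin n → A) →ₗ[C] A →ₗ[C] Fin n → A}

theorem cocycleCorrection_apply (x : Fin n → A) :
    cocycleCorrection P₀ d x = -∑ j, d (P₀ᵀ j) (x j) := by
  simp [cocycleCorrection, LinearMap.sum_apply]

theorem cocycleCorrection_mem (hd : ∀ x a, d x a ∈ P₀.fixedSubmodule C) (x : Fin n → A) :
    cocycleCorrection P₀ d x ∈ P₀.fixedSubmodule C := by
  rw [cocycleCorrection_apply]
  exact neg_mem (sum_mem fun j _ => hd _ _)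

theorem cocycleCorrection_op_smul (hP : P₀ * P₀ = P₀)
    (hd : ∀ ξ ∈ P₀.fixedSubmodule C, ∀ a b, d ξ (a * b) = d (ξ <• a) b + d ξ a <• b)
    {x : Fin n → A} (hx : x ∈ P₀.fixedSubmodule C) (a : A) :
    cocycleCorrection P₀ d (x <• a) = cocycleCorrection P₀ d x <• a - d x a := by
  have hsum : ∑ j, P₀ᵀ j <• x j = x := (Matrix.mulVec_eq_sum x P₀).symm.trans hx
  simp only [cocycleCorrection_apply, Pi.smul_apply, MulOpposite.smul_eq_mul_unop,
    MulOpposite.unop_op]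
  rw [sum_congr rfl fun j _ => hd _ (Matrix.transpose_apply_mem_fixedSubmodule hP j) (x j) a,
    sum_add_distrib, ← LinearMap.map_sum₂, hsum, smul_neg, ← smul_sum]
  abel

variable (P₀) [StarRing C] [Invertible (2 : C)]

def hermitianCorrection (e : (Fin n → A) →ₗ⋆[C] (Fin n → A) →ₗ[C] A) :
    (Fin n → A) →ₗ[C] Fin n → A :=
  (-⅟2 : C) • LinearMap.pi fun i => e (P₀ᵀ i)

variable {P₀} {e : (Fin n → A) →ₗ⋆[C] (Fin n → A) →ₗ[C] A}

theorem hermitianCorrection_apply (x : Fin n → A) (i : Fin n) :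
    hermitianCorrection P₀ e x i = (-⅟2 : C) • e (P₀ᵀ i) x :=
  rfl

theorem hermitianCorrection_op_smul (hP : P₀ * P₀ = P₀)
    (he : ∀ x ∈ P₀.fixedSubmodule C, ∀ y ∈ P₀.fixedSubmodule C, ∀ a, e x (y <• a) = e x y * a)
    {x : Fin n → A} (hx : x ∈ P₀.fixedSubmodule C) (a : A) :
    hermitianCorrection P₀ e (x <• a) = hermitianCorrection P₀ e x <• a := by
  ext i
  simp only [hermitianCorrection_apply, Pi.smul_apply, MulOpposite.smul_eq_mul_unop,
    MulOpposite.unop_op]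
  rw [he _ (Matrix.transpose_apply_mem_fixedSubmodule hP i) x hx, smul_mul_assoc]

variable [StarRing A]

theorem hermitianCorrection_mem (hP : P₀ * P₀ = P₀) (hPh : P₀ᴴ = P₀)
    (he_star : ∀ x y, star (e x y) = e y x)
    (he : ∀ x ∈ P₀.fixedSubmodule C, ∀ y ∈ P₀.fixedSubmodule C, ∀ a, e x (y <• a) = e x y * a)
    {x : Fin n → A} (hx : x ∈ P₀.fixedSubmodule C) :
    hermitianCorrection P₀ e x ∈ P₀.fixedSubmodule C := by
  have hcol := Matrix.transpose_apply_mem_fixedSubmodule (C := C) hP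
  have hconj : ∀ i k, P₀ k i * e (P₀ᵀ i) x = e (P₀ᵀ i <• P₀ i k) x := by
    intro i k
    have hstar : star (P₀ i k) = P₀ k i := by rw [← Matrix.conjTranspose_apply, hPh]
    rw [← he_star x (P₀ᵀ i <• P₀ i k), he x hx _ (hcol i), star_mul, he_star, hstar]
  have hsum : ∀ k, ∑ i, P₀ᵀ i <• P₀ i k = P₀ᵀ k := fun k =>
    (Matrix.mulVec_eq_sum (P₀ᵀ k) P₀).symm.trans (hcol k)
  ext k
  simp only [Matrix.mulVec, dotProduct, hermitianCorrection_apply, mul_smul_comm, ← smul_sum,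
    hconj, ← LinearMap.sum_apply, ← map_sum, hsum]

variable [StarModule C A]

theorem sum_star_hermitianCorrection_mul (hP : P₀ * P₀ = P₀)
    (he_star : ∀ x y, star (e x y) = e y x)
    (he : ∀ x ∈ P₀.fixedSubmodule C, ∀ y ∈ P₀.fixedSubmodule C, ∀ a, e x (y <• a) = e x y * a)
    {x y : Fin n → A} (hx : x ∈ P₀.fixedSubmodule C) (hy : y ∈ P₀.fixedSubmodule C) :
    ∑ i, star (hermitianCorrection P₀ e x i) * y i = (-⅟2 : C) • e x y := by
  have hsum : ∑ j, P₀ᵀ j <• y j = y := (Matrix.mulVec_eq_sum y P₀).symm.trans hy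
  simp only [hermitianCorrection_apply, star_smul, star_neg, star_invOf_two, he_star,
    smul_mul_assoc, ← smul_sum]
  congr 1
  calc ∑ i, e x (P₀ᵀ i) * y i = ∑ i, e x (P₀ᵀ i <• y i) := sum_congr rfl fun i _ =>
        (he x hx _ (Matrix.transpose_apply_mem_fixedSubmodule hP i) _).symm
    _ = e x y := by rw [← map_sum, hsum]

theorem sum_star_mul_hermitianCorrection (hP : P₀ * P₀ = P₀)
    (he_star : ∀ x y, star (e x y) = e y x)
    (he : ∀ x ∈ P₀.fixedSubmodule C, ∀ y ∈ P₀.fixedSubmodule C, ∀ a, e x (y <• a) = e x y * a)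
    {x y : Fin n → A} (hx : x ∈ P₀.fixedSubmodule C) (hy : y ∈ P₀.fixedSubmodule C) :
    ∑ i, star (x i) * hermitianCorrection P₀ e y i = (-⅟2 : C) • e x y := by
  rw [← star_star (∑ i, _), star_sum]
  simp only [star_mul, star_star]
  rw [sum_star_hermitianCorrection_mul hP he_star he hy hx, star_smul, star_neg, star_invOf_two,
    he_star]

end Corrections

section Construction

variable {C A : Type*} [CommRing C] [StarRing C] [Ring A] [Algebra C A] [StarRing A]
  [StarModule C A] {n : ℕ} {D : FormalDeformation C A} {P₀ : Matrix (Fin n) (Fin n) A}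
  (M M' : HermitianDeformedModule D P₀) (hP : P₀ * P₀ = P₀)

structure IsIsometryUpTo (T : ℕ → (Fin n → A) →ₗ[C] Fin n → A) (m : ℕ) : Prop where
  zero : T 0 = LinearMap.id
  mapsTo : ∀ k, ∀ x ∈ P₀.fixedSubmodule C, T k x ∈ P₀.fixedSubmodule C
  modDefect_eq_zero : ∀ t ≤ m, ∀ x ∈ P₀.fixedSubmodule C, ∀ a, modDefect M M' hP T t x a = 0
  isoDefect_eq_zero : ∀ t ≤ m, ∀ x ∈ P₀.fixedSubmodule C, ∀ y ∈ P₀.fixedSubmodule C,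
    isoDefect M M' hP T t x y = 0

def modCorrect (T : ℕ → (Fin n → A) →ₗ[C] Fin n → A) (N : ℕ) :
    ℕ → (Fin n → A) →ₗ[C] Fin n → A :=
  T + Pi.single N (cocycleCorrection P₀ (modDefect M M' hP T N))

def isoCorrect [Invertible (2 : C)] (T : ℕ → (Fin n → A) →ₗ[C] Fin n → A) (N : ℕ) :
    ℕ → (Fin n → A) →ₗ[C] Fin n → A :=
  T + Pi.single N (hermitianCorrection P₀ (isoDefect M M' hP T N))

variable {M M' hP}

theorem modDefect_congr {T T' : ℕ → (Fin n → A) →ₗ[C] Fin n → A} {t : ℕ}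
    (h : ∀ k ≤ t, T k = T' k) : modDefect M M' hP T t = modDefect M M' hP T' t := by
  unfold modDefect
  congr 1 <;> refine sum_congr rfl fun p hp => ?_
  · rw [h _ (HasAntidiagonal.antidiagonal.fst_le hp)]
  · rw [h _ (HasAntidiagonal.antidiagonal.snd_le hp)]

theorem isoDefect_congr {T T' : ℕ → (Fin n → A) →ₗ[C] Fin n → A} {t : ℕ}
    (h : ∀ k ≤ t, T k = T' k) : isoDefect M M' hP T t = isoDefect M M' hP T' t := by
  unfold isoDefect
  congr 1
  refine sum_congr rfl fun q hq => ?_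
  rw [h _ (HasAntidiagonal.antidiagonal.snd_le hq)]
  congr 1
  exact sum_congr rfl fun p hp => by
    rw [h _ ((HasAntidiagonal.antidiagonal.snd_le hp).trans
      (HasAntidiagonal.antidiagonal.fst_le hq))]

theorem modDefect_add_single (T : ℕ → (Fin n → A) →ₗ[C] Fin n → A) (N : ℕ)
    (S : (Fin n → A) →ₗ[C] Fin n → A) (x : Fin n → A) (a : A) :
    modDefect M M' hP (T + Pi.single N S) N x a =
      modDefect M M' hP T N x a + (S (M.act hP 0 x a) - M'.act hP 0 (S x) a) := by
  set s : ℕ → (Fin n → A) →ₗ[C] Fin n → A := Pi.single N S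
  have hs : ∀ k ≠ N, s k = 0 := fun k hk => by simp [s, hk]
  have hsN : s N = S := by simp [s]
  have h₁ : ∑ p ∈ antidiagonal N, s p.1 (M.act hP p.2 x a) = S (M.act hP 0 x a) := by
    rw [Nat.sum_antidiagonal_eq_of_snd_ne_zero, hsN]
    intro p hp h
    rw [hs _ (Nat.antidiagonal.fst_lt_of_snd_ne_zero hp h).ne, LinearMap.zero_apply]
  have h₂ : ∑ p ∈ antidiagonal N, M'.act hP p.1 (s p.2 x) a = M'.act hP 0 (S x) a := by
    rw [Nat.sum_antidiagonal_eq_of_fst_ne_zero, hsN]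
    intro p hp h
    rw [hs _ (Nat.antidiagonal.snd_lt_of_fst_ne_zero hp h).ne, LinearMap.zero_apply, map_zero,
      LinearMap.zero_apply]
  simp only [modDefect_apply, Pi.add_apply, LinearMap.add_apply, map_add, sum_add_distrib, h₁,
    h₂]
  abel

theorem isoDefect_add_single (T : ℕ → (Fin n → A) →ₗ[C] Fin n → A) {N : ℕ} (hN : N ≠ 0)
    (S : (Fin n → A) →ₗ[C] Fin n → A) (x y : Fin n → A) :
    isoDefect M M' hP (T + Pi.single N S) N x y = isoDefect M M' hP T N x y +
      M'.form hP 0 (S x) (T 0 y) + M'.form hP 0 (T 0 x) (S y) := by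
  set s : ℕ → (Fin n → A) →ₗ[C] Fin n → A := Pi.single N S
  have hs : ∀ k ≠ N, s k = 0 := fun k hk => by simp [s, hk]
  have hsN : s N = S := by simp [s]
  have h₁ : ∑ q ∈ antidiagonal N, ∑ p ∈ antidiagonal q.1,
      M'.form hP p.1 (T p.2 x) (s q.2 y) = M'.form hP 0 (T 0 x) (S y) := by
    rw [Nat.sum_antidiagonal_eq_of_fst_ne_zero, Nat.antidiagonal_zero, sum_singleton, hsN]
    intro q hq h
    simp [hs _ (Nat.antidiagonal.snd_lt_of_fst_ne_zero hq h).ne]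
  have h₂ : ∑ q ∈ antidiagonal N, ∑ p ∈ antidiagonal q.1,
      M'.form hP p.1 (s p.2 x) (T q.2 y) = M'.form hP 0 (S x) (T 0 y) := by
    rw [Nat.sum_antidiagonal_eq_of_snd_ne_zero, Nat.sum_antidiagonal_eq_of_fst_ne_zero, hsN]
    · intro p hp h
      simp [hs _ (Nat.antidiagonal.snd_lt_of_fst_ne_zero hp h).ne]
    · intro q hq h
      refine sum_eq_zero fun p hp => ?_
      simp [hs _ ((HasAntidiagonal.antidiagonal.snd_le hp).trans_lt
        (Nat.antidiagonal.fst_lt_of_snd_ne_zero hq h)).ne]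
  have h₃ : ∑ q ∈ antidiagonal N, ∑ p ∈ antidiagonal q.1,
      M'.form hP p.1 (s p.2 x) (s q.2 y) = 0 := by
    refine sum_eq_zero fun q hq => sum_eq_zero fun p hp => ?_
    have := HasAntidiagonal.mem_antidiagonal.1 hq
    have := HasAntidiagonal.antidiagonal.snd_le hp
    by_cases hp₂ : p.2 = N
    · simp [hs q.2 (by omega)]
    · simp [hs p.2 hp₂]
  simp only [isoDefect_apply, Pi.add_apply, LinearMap.add_apply, map_add, sum_add_distrib, h₁,
    h₂, h₃]
  abel

theorem IsIsometryUpTo.add_single {T : ℕ → (Fin n → A) →ₗ[C] Fin n → A} {m : ℕ}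
    (h : IsIsometryUpTo M M' hP T m) {S : (Fin n → A) →ₗ[C] Fin n → A}
    (hS : ∀ x ∈ P₀.fixedSubmodule C, S x ∈ P₀.fixedSubmodule C) :
    IsIsometryUpTo M M' hP (T + Pi.single (m + 1) S) m where
  zero := by simp [h.zero]
  mapsTo k x hx := by
    by_cases hk : k = m + 1
    · subst hk
      simpa using add_mem (h.mapsTo _ x hx) (hS x hx)
    · simpa [hk] using h.mapsTo k x hx
  modDefect_eq_zero t ht := by
    rw [modDefect_congr (T' := T) fun k hk => by simp [show k ≠ m + 1 by omega]]
    exact h.modDefect_eq_zero t ht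
  isoDefect_eq_zero t ht := by
    rw [isoDefect_congr (T' := T) fun k hk => by simp [show k ≠ m + 1 by omega]]
    exact h.isoDefect_eq_zero t ht

theorem isIsometryUpTo_zero {T : ℕ → (Fin n → A) →ₗ[C] Fin n → A} (h0 : T 0 = LinearMap.id)
    (hT : ∀ k, ∀ x ∈ P₀.fixedSubmodule C, T k x ∈ P₀.fixedSubmodule C) :
    IsIsometryUpTo M M' hP T 0 where
  zero := h0
  mapsTo := hT
  modDefect_eq_zero t ht x hx a := by
    obtain rfl := Nat.le_zero.1 ht
    simp [modDefect_apply, h0, M.act_zero_of_mem hx, M'.act_zero_of_mem hx]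
  isoDefect_eq_zero t ht x hx y hy := by
    obtain rfl := Nat.le_zero.1 ht
    simp [isoDefect_apply, h0, M.form_zero_of_mem hx hy, M'.form_zero_of_mem hx hy]

theorem isIsometryUpTo_modCorrect {T : ℕ → (Fin n → A) →ₗ[C] Fin n → A} {m : ℕ}
    (h : IsIsometryUpTo M M' hP T m) :
    IsIsometryUpTo M M' hP (modCorrect M M' hP T (m + 1)) m ∧
      ∀ x ∈ P₀.fixedSubmodule C, ∀ a,
        modDefect M M' hP (modCorrect M M' hP T (m + 1)) (m + 1) x a = 0 := by
  have hd := modDefect_mem (M := M) (M' := M') (hP := hP) h.mapsTo (m + 1)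
  refine ⟨h.add_single fun x _ => cocycleCorrection_mem hd x, fun x hx a => ?_⟩
  have hu := cocycleCorrection_op_smul hP (fun ξ hξ a b => modDefect_mul (N := m + 1) h.mapsTo
    (fun t ht => h.modDefect_eq_zero t (Nat.le_of_lt_succ ht)) hξ a b) hx a
  rw [modCorrect, modDefect_add_single, M.act_zero_of_mem hx,
    M'.act_zero_of_mem (cocycleCorrection_mem hd x), hu]
  abel

theorem isIsometryUpTo_isoCorrect [Invertible (2 : C)] (hPh : P₀ᴴ = P₀)
    {T : ℕ → (Fin n → A) →ₗ[C] Fin n → A} {m : ℕ} (h : IsIsometryUpTo M M' hP T m)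
    (hmod : ∀ x ∈ P₀.fixedSubmodule C, ∀ a, modDefect M M' hP T (m + 1) x a = 0) :
    IsIsometryUpTo M M' hP (isoCorrect M M' hP T (m + 1)) (m + 1) := by
  have he : ∀ x ∈ P₀.fixedSubmodule C, ∀ y ∈ P₀.fixedSubmodule C, ∀ a,
      isoDefect M M' hP T (m + 1) x (y <• a) = isoDefect M M' hP T (m + 1) x y * a :=
    fun x hx y hy a => isoDefect_op_smul
      (fun t ht => (Nat.le_succ_iff.1 ht).elim (h.modDefect_eq_zero t) fun ht => ht ▸ hmod)
      (fun t ht => h.isoDefect_eq_zero t (Nat.le_of_lt_succ ht)) hx hy a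
  have hB : ∀ x ∈ P₀.fixedSubmodule C,
      hermitianCorrection P₀ (isoDefect M M' hP T (m + 1)) x ∈ P₀.fixedSubmodule C :=
    fun x hx => hermitianCorrection_mem hP hPh (star_isoDefect _) he hx
  have hlow := h.add_single hB
  refine ⟨hlow.zero, hlow.mapsTo, fun t ht => ?_, fun t ht => ?_⟩
  · rcases Nat.le_succ_iff.1 ht with ht | rfl
    · exact hlow.modDefect_eq_zero t ht
    intro x hx a
    rw [isoCorrect, modDefect_add_single, hmod x hx, M.act_zero_of_mem hx,
      M'.act_zero_of_mem (hB x hx), hermitianCorrection_op_smul hP he hx, sub_self, add_zero]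
  · rcases Nat.le_succ_iff.1 ht with ht | rfl
    · exact hlow.isoDefect_eq_zero t ht
    intro x hx y hy
    rw [isoCorrect, isoDefect_add_single _ m.succ_ne_zero, h.zero, LinearMap.id_apply,
      LinearMap.id_apply, M'.form_zero_of_mem (hB x hx) hy, M'.form_zero_of_mem hx (hB y hy),
      sum_star_hermitianCorrection_mul hP (star_isoDefect _) he hx hy,
      sum_star_mul_hermitianCorrection hP (star_isoDefect _) he hx hy, add_assoc, ← add_smul,
      ← neg_add, invOf_two_add_invOf_two, neg_smul, one_smul, add_neg_cancel]

end Construction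

section Isometry

variable {C A : Type*} [CommRing C] [StarRing C] [Invertible (2 : C)] [Ring A] [Algebra C A]
  [StarRing A] [StarModule C A] {n : ℕ} {D : FormalDeformation C A}
  {P₀ : Matrix (Fin n) (Fin n) A} (M M' : HermitianDeformedModule D P₀) (hP : P₀ * P₀ = P₀)

def approxIsometry : ℕ → ℕ → (Fin n → A) →ₗ[C] Fin n → A
  | 0 => Pi.single 0 LinearMap.id
  | m + 1 => isoCorrect M M' hP (modCorrect M M' hP (approxIsometry m) (m + 1)) (m + 1)

def deformationIsometry (k : ℕ) : (Fin n → A) →ₗ[C] Fin n → A :=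
  approxIsometry M M' hP k k

variable {M M' hP}

theorem approxIsometry_succ_apply {m k : ℕ} (hk : k ≠ m + 1) :
    approxIsometry M M' hP (m + 1) k = approxIsometry M M' hP m k := by
  simp [approxIsometry, isoCorrect, modCorrect, hk]

theorem approxIsometry_of_le {k m : ℕ} (h : k ≤ m) :
    approxIsometry M M' hP m k = deformationIsometry M M' hP k := by
  induction m, h using Nat.le_induction with
  | base => rfl
  | succ m hkm ih => rw [approxIsometry_succ_apply (by omega), ih]

theorem isIsometryUpTo_approxIsometry (hPh : P₀ᴴ = P₀) (m : ℕ) :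
    IsIsometryUpTo M M' hP (approxIsometry M M' hP m) m := by
  induction m with
  | zero =>
    refine isIsometryUpTo_zero (by simp [approxIsometry]) fun k x hx => ?_
    by_cases hk : k = 0
    · simpa [approxIsometry, hk] using hx
    · simp [approxIsometry, hk]
  | succ m ih =>
    obtain ⟨h, hmod⟩ := isIsometryUpTo_modCorrect ih
    exact isIsometryUpTo_isoCorrect hPh h hmod

theorem isIsometryUpTo_deformationIsometry (hPh : P₀ᴴ = P₀) (m : ℕ) :
    IsIsometryUpTo M M' hP (deformationIsometry M M' hP) m := by
  have h := isIsometryUpTo_approxIsometry (M := M) (M' := M') (hP := hP) hPh m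
  have heq : ∀ k ≤ m, approxIsometry M M' hP m k = deformationIsometry M M' hP k :=
    fun k hk => approxIsometry_of_le hk
  refine ⟨heq 0 m.zero_le ▸ h.zero, fun k => (isIsometryUpTo_approxIsometry hPh k).mapsTo k,
    fun t ht => ?_, fun t ht => ?_⟩
  · rw [← modDefect_congr fun k hk => heq k (hk.trans ht)]
    exact h.modDefect_eq_zero t ht
  · rw [← isoDefect_congr fun k hk => heq k (hk.trans ht)]
    exact h.isoDefect_eq_zero t ht

end Isometry

section SeriesEquivalence

variable {C A : Type*} [CommRing C] [StarRing C] [Ring A] [Algebra C A] [StarRing A]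
  [StarModule C A] {n : ℕ} {D : FormalDeformation C A} {P₀ : Matrix (Fin n) (Fin n) A}
  {M M' : HermitianDeformedModule D P₀} {hP : P₀ * P₀ = P₀}
  {T : ℕ → (Fin n → A) →ₗ[C] Fin n → A}

theorem fdMap_fdConv_R (hT : ∀ m, IsIsometryUpTo M M' hP T m) {x : ℕ → Fin n → A}
    (hx : ∀ k, x k ∈ P₀.fixedSubmodule C) (a : ℕ → A) :
    fdMap (fun r => T r) (fdConv M.R x a) = fdConv M'.R (fdMap (fun r => T r) x) a := by
  rw [M.fdConv_R_eq_act hP hx, M'.fdConv_R_eq_act hP (fdMap_mem (hT 0).mapsTo hx),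
    ← sub_eq_zero, ← fdConv_modDefect]
  ext N : 1
  exact sum_eq_zero fun (p : ℕ × ℕ) _ => sum_eq_zero fun (q : ℕ × ℕ) _ =>
    (hT p.1).modDefect_eq_zero p.1 le_rfl _ (hx _) _

theorem fdConv_h_fdMap (hT : ∀ m, IsIsometryUpTo M M' hP T m) {x y : ℕ → Fin n → A}
    (hx : ∀ k, x k ∈ P₀.fixedSubmodule C) (hy : ∀ k, y k ∈ P₀.fixedSubmodule C) :
    fdConv M'.h (fdMap (fun r => T r) x) (fdMap (fun r => T r) y) = fdConv M.h x y := by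
  rw [M.fdConv_h_eq_form hP hx hy, M'.fdConv_h_eq_form hP (fdMap_mem (hT 0).mapsTo hx)
    (fdMap_mem (hT 0).mapsTo hy), ← sub_eq_zero, ← fdConv_isoDefect]
  ext N : 1
  exact sum_eq_zero fun (p : ℕ × ℕ) _ => sum_eq_zero fun (q : ℕ × ℕ) _ =>
    (hT p.1).isoDefect_eq_zero p.1 le_rfl _ (hx _) _ (hy _)

end SeriesEquivalence

theorem hermitian_module_deformation_unique_general {C A : Type*} [CommRing C] [StarRing C]
    [Invertible (2 : C)] [Ring A] [Algebra C A] [StarRing A] [StarModule C A]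
    (D : FormalDeformation C A) (n : ℕ)
    (P₀ : Matrix (Fin n) (Fin n) A)
    (hP₀idem : P₀ * P₀ = P₀) (hP₀herm : P₀ᴴ = P₀)
    (M M' : HermitianDeformedModule D P₀) :
    ∃ T : ℕ → (Fin n → A) → Fin n → A,
      -- T = id + ∑_{r≥1} T_r λ^r, with C-linear maps T_r : E → E
      (∀ x, P₀.mulVec x = x → T 0 x = x) ∧
      (∀ r x, P₀.mulVec x = x → P₀.mulVec (T r x) = T r x) ∧
      (∀ r x y, P₀.mulVec x = x → P₀.mulVec y = y → T r (x + y) = T r x + T r y) ∧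
      (∀ r (c : C) x, P₀.mulVec x = x → T r (c • x) = c • T r x) ∧
      -- T is a qA-module map
      (∀ (x : ℕ → Fin n → A) (a : ℕ → A), (∀ m, P₀.mulVec (x m) = x m) →
        fdMap T (fdConv M.R x a) = fdConv M'.R (fdMap T x) a) ∧
      -- T is bijective from E[[λ]] to E[[λ]]
      (∀ x y : ℕ → Fin n → A, (∀ m, P₀.mulVec (x m) = x m) →
        (∀ m, P₀.mulVec (y m) = y m) → fdMap T x = fdMap T y → x = y) ∧
      (∀ y : ℕ → Fin n → A, (∀ m, P₀.mulVec (y m) = y m) →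
        ∃ x : ℕ → Fin n → A, (∀ m, P₀.mulVec (x m) = x m) ∧ fdMap T x = y) ∧
      -- T is isometric: h'(Tx, Ty) = h(x, y)
      (∀ x y : ℕ → Fin n → A, (∀ m, P₀.mulVec (x m) = x m) →
        (∀ m, P₀.mulVec (y m) = y m) →
        fdConv M'.h (fdMap T x) (fdMap T y) = fdConv M.h x y) := by
  obtain ⟨T, hT⟩ : ∃ T, ∀ m, IsIsometryUpTo M M' hP₀idem T m :=
    ⟨_, isIsometryUpTo_deformationIsometry hP₀herm⟩
  have h0 : ∀ u, T 0 u = u := fun u => by rw [(hT 0).zero, LinearMap.id_apply]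
  exact ⟨fun r => T r, fun x _ => h0 x, fun r x hx => (hT 0).mapsTo r x hx,
    fun r x y _ _ => map_add (T r) x y, fun r c x _ => map_smul (T r) c x,
    fun x a hx => fdMap_fdConv_R hT hx a, fun x y _ _ hxy => fdMap_injective h0 hxy,
    fun y hy => ⟨fdMapInv (fun r => T r) y, fdMapInv_mem (hT 0).mapsTo hy, fdMap_fdMapInv h0 y⟩,
    fun x y hx hy => fdConv_h_fdMap hT hx hy⟩

/-- Proposition 2.10, uniqueness part. Any two Hermitian deformations
of the inner-product module `(E = P₀Aⁿ, h₀)` corresponding to a Hermitian deformation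
`qA` are isometrically equivalent via some `T = id + ∑_{r≥1} T_r λ^r`. -/
theorem hermitian_module_deformation_unique {C A : Type*} [CommRing C] [StarRing C]
    [Invertible (2 : C)] [Ring A] [Algebra C A] [StarRing A] [StarModule C A]
    (D : FormalDeformation C A) (hD : D.IsHermitian) (n : ℕ)
    (P₀ : Matrix (Fin n) (Fin n) A)
    (hP₀idem : P₀ * P₀ = P₀) (hP₀herm : P₀ᴴ = P₀)
    (M M' : HermitianDeformedModule D P₀) :
    ∃ T : ℕ → (Fin n → A) → Fin n → A,
      -- T = id + ∑_{r≥1} T_r λ^r, with C-linear maps T_r : E → E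
      (∀ x, P₀.mulVec x = x → T 0 x = x) ∧
      (∀ r x, P₀.mulVec x = x → P₀.mulVec (T r x) = T r x) ∧
      (∀ r x y, P₀.mulVec x = x → P₀.mulVec y = y → T r (x + y) = T r x + T r y) ∧
      (∀ r (c : C) x, P₀.mulVec x = x → T r (c • x) = c • T r x) ∧
      -- T is a qA-module map
      (∀ (x : ℕ → Fin n → A) (a : ℕ → A), (∀ m, P₀.mulVec (x m) = x m) →
        fdMap T (fdConv M.R x a) = fdConv M'.R (fdMap T x) a) ∧
      -- T is bijective from E[[λ]] to E[[λ]]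
      (∀ x y : ℕ → Fin n → A, (∀ m, P₀.mulVec (x m) = x m) →
        (∀ m, P₀.mulVec (y m) = y m) → fdMap T x = fdMap T y → x = y) ∧
      (∀ y : ℕ → Fin n → A, (∀ m, P₀.mulVec (y m) = y m) →
        ∃ x : ℕ → Fin n → A, (∀ m, P₀.mulVec (x m) = x m) ∧ fdMap T x = y) ∧
      -- T is isometric: h'(Tx, Ty) = h(x, y)
      (∀ x y : ℕ → Fin n → A, (∀ m, P₀.mulVec (x m) = x m) →
        (∀ m, P₀.mulVec (y m) = y m) →
        fdConv M'.h (fdMap T x) (fdMap T y) = fdConv M.h x y) :=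
  hermitian_module_deformation_unique_general D n P₀ hP₀idem hP₀herm M M'
end

section
/- Let k be a commutative unital ring, A a unital k-algebra, qA = (A[[λ]], ⋆) a formal deformation of A with a ⋆ b = Σ_{r≥0} C_r(a,b) λ^r, P_0 ∈ M_n(A) an idempotent, and P ∈ M_n(A)[[λ]] a ⋆-idempotent deforming P_0. Consider E = P_0 A^n (column vectors x with P_0 x = x) and the deformed right module structure on E[[λ]] defined by x • a := I^{-1}(P ⋆ x ⋆ a), where I(y) = P ⋆ y ⋆ 1 is the isomorphism from (P_0 A^n)[[λ]] onto P ⋆ A^n[[λ]] given by y ↦ P ⋆ y (column vectors, entrywise ⋆-operations). Write x • a = Σ_{r≥0} R_r(x,a) λ^r for x ∈ E, a ∈ A. Then the first-order term is R_1(x,a) = P_0 C_1(x,a), where C_1(x,a) ∈ A^n is defined componentwise by C_1(x,a)_i = C_1(x_i, a); in particular R_1 does not depend on the choice of the ⋆-idempotent P deforming P_0. -/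
/-!
Write `w = x ⋆ a`, so that `P ⋆ z = P ⋆ w`, and compare the two sides order by order.
At order zero this reads `P₀ z₀ = P₀ (x a) = x a`, so `z₀ = w₀`. At order one both sides
are `P₀ (·)₁ + P₁ (·)₀ + C₁(P₀, (·)₀)`; the last two terms agree since `z₀ = w₀`, leaving
`z₁ = P₀ z₁ = P₀ w₁ = P₀ C₁(x, a)`.
-/

open scoped Matrix

theorem fdConv_apply_zero {M N P : Type*} [AddCommMonoid P] (B : ℕ → M → N → P)
    (x : ℕ → M) (y : ℕ → N) : fdConv B x y 0 = B 0 (x 0) (y 0) := by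
  simp [fdConv]

theorem fdConv_apply_one {M N P : Type*} [AddCommMonoid P] (B : ℕ → M → N → P)
    (x : ℕ → M) (y : ℕ → N) :
    fdConv B x y 1 = B 0 (x 0) (y 1) + B 0 (x 1) (y 0) + B 1 (x 0) (y 0) := by
  simp [fdConv, Finset.Nat.sum_antidiagonal_succ]

theorem fdConv_fdC_fdC_s10 {M N P : Type*} [Zero M] [Zero N] [AddCommMonoid P]
    (B : ℕ → M → N → P) (hB₁ : ∀ r y, B r 0 y = 0) (hB₂ : ∀ r x, B r x 0 = 0)
    (x : M) (y : N) (m : ℕ) : fdConv B (fdC x) (fdC y) m = B m x y := by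
  rw [fdConv, Finset.sum_eq_single (m, 0)]
  · simp [fdC]
  · rintro ⟨r, j⟩ hrj hne
    have hj : j ≠ 0 := by
      rintro rfl
      simp_all
    refine Finset.sum_eq_zero fun ⟨q₁, q₂⟩ hq => ?_
    rw [Finset.HasAntidiagonal.mem_antidiagonal] at hq
    rcases Nat.eq_zero_or_pos q₁ with rfl | hq₁
    · simp [fdC, show q₂ ≠ 0 by omega, hB₂]
    · simp [fdC, hq₁.ne', hB₁]
  · simp

theorem Matrix.mulVec_mul_const {m n R : Type*} [Fintype n] [Semiring R]
    (M : Matrix m n R) (v : n → R) (a : R) :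
    M *ᵥ (fun i => v i * a) = fun i => (M *ᵥ v) i * a := by
  ext i
  simp [Matrix.mulVec, dotProduct, Finset.sum_mul, mul_assoc]

namespace FormalDeformation

variable {k A : Type*} [CommRing k] [Ring A] [Algebra k A]
  (D : FormalDeformation k A) {n : ℕ}

theorem sum_C_zero_eq_mulVec (L : Matrix (Fin n) (Fin n) A) (v : Fin n → A) :
    (fun i => ∑ j, D.C 0 (L i j) (v j)) = L *ᵥ v := by
  ext i
  simp [D.C_zero, Matrix.mulVec, dotProduct]

theorem vsMul_fdC_fdC (v : Fin n → A) (a : A) (m : ℕ) :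
    D.vsMul n (fdC v) (fdC a) m = fun i => D.C m (v i) a :=
  fdConv_fdC_fdC_s10 _ (fun _ _ => by ext; simp) (fun _ _ => by ext; simp) v a m

theorem mvMul_apply_zero (L : ℕ → Matrix (Fin n) (Fin n) A) (v : ℕ → Fin n → A) :
    D.mvMul n L v 0 = L 0 *ᵥ v 0 := by
  rw [mvMul, fdConv_apply_zero, sum_C_zero_eq_mulVec]

theorem mvMul_apply_one (L : ℕ → Matrix (Fin n) (Fin n) A) (v : ℕ → Fin n → A) :
    D.mvMul n L v 1 =
      L 0 *ᵥ v 1 + L 1 *ᵥ v 0 + fun i => ∑ j, D.C 1 (L 0 i j) (v 0 j) := by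
  rw [mvMul, fdConv_apply_one, sum_C_zero_eq_mulVec, sum_C_zero_eq_mulVec]

end FormalDeformation

theorem first_order_term_of_deformed_action_general {k A : Type*} [CommRing k] [Ring A]
    [Algebra k A]
    (D : FormalDeformation k A) (n : ℕ)
    (P₀ : Matrix (Fin n) (Fin n) A)
    (P : ℕ → Matrix (Fin n) (Fin n) A)
    (hP0 : P 0 = P₀)
    (x : Fin n → A) (hx : P₀.mulVec x = x) (a : A)
    -- z = x • a = I⁻¹(P ⋆ x ⋆ a): the unique corner series with I(z) = P ⋆ x ⋆ a
    (z : ℕ → Fin n → A) (hz : ∀ m, P₀.mulVec (z m) = z m)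
    (hzdef : D.mvMul n P z = D.mvMul n P (D.vsMul n (fdC x) (fdC a))) :
    z 1 = P₀.mulVec fun i => D.C 1 (x i) a := by
  set w := D.vsMul n (fdC x) (fdC a)
  have hw : ∀ m, w m = fun i => D.C m (x i) a := D.vsMul_fdC_fdC x a
  have hz₀ : z 0 = w 0 := by
    have h₀ := congrFun hzdef 0
    rw [D.mvMul_apply_zero, D.mvMul_apply_zero, hP0, hz 0, hw 0] at h₀
    simpa [hw 0, D.C_zero, Matrix.mulVec_mul_const, hx] using h₀
  have h₁ := congrFun hzdef 1
  rw [D.mvMul_apply_one, D.mvMul_apply_one, hz₀, hP0, hz 1] at h₁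
  rw [add_right_cancel (add_right_cancel h₁), hw 1]

/-- Equation (14), "RoneTerm". For the deformed module structure
`x • a = I⁻¹(P ⋆ x ⋆ a)` on `E[[λ]] = (P₀Aⁿ)[[λ]]` (where `I(y) = P ⋆ y`), the
first-order term of the deformed action is `R₁(x, a) = P₀ C₁(x, a)`; in particular
it does not depend on the chosen ⋆-idempotent `P` deforming `P₀`. -/
theorem first_order_term_of_deformed_action {k A : Type*} [CommRing k] [Ring A]
    [Algebra k A]
    (D : FormalDeformation k A) (n : ℕ)
    (P₀ : Matrix (Fin n) (Fin n) A) (hP₀ : P₀ * P₀ = P₀)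
    (P : ℕ → Matrix (Fin n) (Fin n) A)
    (hP : D.matMul n P P = P) (hP0 : P 0 = P₀)
    (x : Fin n → A) (hx : P₀.mulVec x = x) (a : A)
    -- z = x • a = I⁻¹(P ⋆ x ⋆ a): the unique corner series with I(z) = P ⋆ x ⋆ a
    (z : ℕ → Fin n → A) (hz : ∀ m, P₀.mulVec (z m) = z m)
    (hzdef : D.mvMul n P z = D.mvMul n P (D.vsMul n (fdC x) (fdC a))) :
    z 1 = P₀.mulVec fun i => D.C 1 (x i) a :=
  first_order_term_of_deformed_action_general D n P₀ P hP0 x hx a z hz hzdef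
end

section
/- Let k be a commutative unital ring, A a unital k-algebra, qA = (A[[λ]], ⋆) a formal deformation of A with a ⋆ b = Σ_{r≥0} C_r(a,b) λ^r, P_0 ∈ M_n(A) an idempotent, and P ∈ M_n(A)[[λ]] a ⋆-idempotent deforming P_0. Let •' be the transported deformation of the algebra P_0 M_n(A) P_0 defined by a •' b := I^{-1}(I(a) ⋆ I(b)), where I(B) = P ⋆ B ⋆ P, and write L •' S = Σ_{r≥0} B_r(L,S) λ^r for L, S ∈ P_0 M_n(A) P_0. Then the first-order term is B_1(L, S) = P_0 C_1(L, S) P_0, where C_1 on matrices is defined by (C_1(L,S))_{ij} = Σ_{r=1}^n C_1(L_{ir}, S_{rj}). -/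
/-!
Modulo `λ²` the deformed product on `Mₙ(A)[[λ]]` is
`(x₀ + λx₁)(y₀ + λy₁) = x₀y₀ + λ(x₀y₁ + C₁(x₀, y₀) + x₁y₀)`; it is associative because `C₁` is a
Hochschild cocycle, and `P = P₀ + λP₁` is idempotent for it. Hence
`I(L) ⋆ I(S) ≡ P ⋆ (L ⋆ P ⋆ S) ⋆ P`, and since the first-order coefficient of `P ⋆ Y ⋆ P` only
depends on `Y₀` and `P₀Y₁P₀`, we get
`B₁ = P₀(L ⋆ P ⋆ S)₁P₀ = P₀C₁(L, S)P₀ + P₀(LP₁ + C₁(L, P₀))SP₀`.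
The last term vanishes: `P₀(P₁ + C₁(P₀, P₀))P₀ = 0` is idempotency of `P` at first order, and
`C₁(L, P₀)P₀ = L C₁(P₀, P₀)` is the cocycle identity.
-/

open scoped Matrix

section Corner

variable {M : Type*} [Semigroup M] {p x : M}

theorem IsIdempotentElem.mul_left_eq_of_corner (hp : IsIdempotentElem p) (hx : p * x * p = x) :
    p * x = x := by
  rw [← hx, ← mul_assoc, ← mul_assoc, hp.eq]

theorem IsIdempotentElem.mul_right_eq_of_corner (hp : IsIdempotentElem p) (hx : p * x * p = x) :
    x * p = x := by
  rw [← hx, mul_assoc, hp.eq]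

end Corner

section FirstOrder

variable {R : Type*} [Ring R]

def IsHochschildCocycle (c : R → R → R) : Prop :=
  ∀ a b d, c (a * b) d + c a b * d = a * c b d + c a (b * d)

/-- The product of `x.1 + λ x.2` and `y.1 + λ y.2` modulo `λ²` in a deformation whose
first-order cochain is `c`. -/
def firstOrderMul (c : R → R → R) (x y : R × R) : R × R :=
  (x.1 * y.1, x.1 * y.2 + c x.1 y.1 + x.2 * y.1)

variable {c : R → R → R}

local infixl:70 " ⋆ " => firstOrderMul c

theorem firstOrderMul_assoc (hc : IsHochschildCocycle c) (x y z : R × R) :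
    x ⋆ y ⋆ z = x ⋆ (y ⋆ z) := by
  ext
  · exact mul_assoc x.1 y.1 z.1
  · simp only [firstOrderMul]
    linear_combination (norm := noncomm_ring) hc x.1 y.1 z.1

theorem firstOrderMul_sandwich_mul_sandwich (hc : IsHochschildCocycle c) {q : R × R}
    (hq : q ⋆ q = q) (y z : R × R) : q ⋆ y ⋆ q ⋆ (q ⋆ z ⋆ q) = q ⋆ (y ⋆ q ⋆ z) ⋆ q := by
  have hqq : ∀ w, q ⋆ (q ⋆ w) = q ⋆ w := fun w => by rw [← firstOrderMul_assoc hc, hq]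
  simp only [firstOrderMul_assoc hc, hqq]

theorem firstOrderMul_sandwich_snd_eq_of_fst_eq (q : R × R) {y z : R × R} (h₁ : y.1 = z.1)
    (h : q ⋆ y ⋆ q = q ⋆ z ⋆ q) : q.1 * y.2 * q.1 = q.1 * z.2 * q.1 := by
  have h₂ := congrArg Prod.snd h
  simp only [firstOrderMul, h₁] at h₂
  linear_combination (norm := noncomm_ring) h₂

theorem mul_add_mul_eq_zero_of_firstOrderMul_self_eq {p p₁ : R}
    (hq : (p, p₁) ⋆ (p, p₁) = (p, p₁)) : p * (p₁ + c p p) * p = 0 := by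
  have hp : p * p = p := congrArg Prod.fst hq
  have h₁ : p * p₁ + c p p + p₁ * p = p₁ := congrArg Prod.snd hq
  linear_combination (norm := noncomm_ring) p * h₁ * p - hp * p₁ * p - p * p₁ * hp

theorem snd_eq_of_firstOrderMul_sandwich_eq (hc : IsHochschildCocycle c) {p p₁ l s : R}
    {b : R × R} (hq : (p, p₁) ⋆ (p, p₁) = (p, p₁)) (hl : p * l * p = l) (hs : p * s * p = s)
    (hb₀ : p * b.1 * p = b.1) (hb₁ : p * b.2 * p = b.2)
    (h : (p, p₁) ⋆ b ⋆ (p, p₁) =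
      (p, p₁) ⋆ (l, 0) ⋆ (p, p₁) ⋆ ((p, p₁) ⋆ (s, 0) ⋆ (p, p₁))) :
    b.2 = p * c l s * p := by
  have hp : IsIdempotentElem p := congrArg Prod.fst hq
  have hpl := hp.mul_left_eq_of_corner hl
  have hlp := hp.mul_right_eq_of_corner hl
  have hps := hp.mul_left_eq_of_corner hs
  have hsp := hp.mul_right_eq_of_corner hs
  rw [firstOrderMul_sandwich_mul_sandwich hc hq] at h
  set x := (l, 0) ⋆ (p, p₁) ⋆ (s, 0)
  have hx₁ : x.1 = l * s := by simp [x, firstOrderMul, hlp]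
  have hx₂ : x.2 = c l s + (l * p₁ + c l p) * s := by simp [x, firstOrderMul, hlp]
  have hb : b.1 = x.1 :=
    calc b.1 = p * b.1 * p := hb₀.symm
      _ = p * x.1 * p := congrArg Prod.fst h
      _ = x.1 := by rw [hx₁, ← mul_assoc, hpl, mul_assoc, hsp]
  have hclp : c l p * p = l * c p p := by
    have := hc l p p
    rw [hlp, hp.eq, add_comm (l * c p p)] at this
    exact add_left_cancel this
  have hcls : c l p * s = l * c p p * s := by rw [← hclp, mul_assoc, hps]
  have hvanish : p * ((l * p₁ + c l p) * s) * p = 0 :=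
    calc p * ((l * p₁ + c l p) * s) * p = p * (l * (p₁ + c p p) * s) * p := by
          rw [add_mul, hcls]; noncomm_ring
      _ = p * (p * l * p * (p₁ + c p p) * (p * s * p)) * p := by rw [hl, hs]
      _ = p * p * l * (p * (p₁ + c p p) * p) * s * p * p := by noncomm_ring
      _ = 0 := by rw [mul_add_mul_eq_zero_of_firstOrderMul_self_eq hq]; noncomm_ring
  calc b.2 = p * b.2 * p := hb₁.symm
    _ = p * x.2 * p := firstOrderMul_sandwich_snd_eq_of_fst_eq _ hb h
    _ = p * c l s * p := by rw [hx₂, mul_add, add_mul, hvanish, add_zero]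

end FirstOrder

def fdTrunc {M : Type*} (x : ℕ → M) : M × M := (x 0, x 1)

theorem fdTrunc_fdC {M : Type*} [Zero M] (a : M) : fdTrunc (fdC a) = (a, 0) := rfl

theorem fdTrunc_fdConv {R : Type*} [Ring R] {B : ℕ → R → R → R} (hB : ∀ a b, B 0 a b = a * b)
    (x y : ℕ → R) : fdTrunc (fdConv B x y) = firstOrderMul (B 1) (fdTrunc x) (fdTrunc y) := by
  ext
  · simp [fdTrunc, fdConv, firstOrderMul, hB]
  · simp only [fdTrunc, fdConv, firstOrderMul, Finset.Nat.sum_antidiagonal_succ,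
      Finset.Nat.antidiagonal_zero, Finset.sum_singleton, zero_add, hB]
    abel

namespace FormalDeformation

variable {k A : Type*} [CommRing k] [Ring A] [Algebra k A] (D : FormalDeformation k A)

theorem C_one_isHochschildCocycle : IsHochschildCocycle fun a b => D.C 1 a b := by
  intro a b d
  have h := congrArg fdTrunc (D.assoc (fdC a) (fdC b) (fdC d))
  simp only [fdTrunc_fdConv (B := fun r a b => D.C r a b) D.C_zero, fdTrunc_fdC] at h
  simpa [firstOrderMul] using congrArg Prod.snd h

variable (n : ℕ)

theorem matC_zero (L S : Matrix (Fin n) (Fin n) A) : D.matC n 0 L S = L * S := by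
  ext i j
  simp [matC, D.C_zero, Matrix.mul_apply]

theorem matC_one_isHochschildCocycle : IsHochschildCocycle (D.matC n 1) := by
  intro L S T
  ext i j
  simp only [matC, Matrix.add_apply, Matrix.mul_apply, Matrix.of_apply, Finset.sum_mul,
    Finset.mul_sum, map_sum, LinearMap.coe_sum, Finset.sum_apply, ← Finset.sum_add_distrib]
  rw [Finset.sum_comm]
  exact Finset.sum_congr rfl fun s _ => Finset.sum_congr rfl fun t _ =>
    D.C_one_isHochschildCocycle (L i s) (S s t) (T t j)

theorem fdTrunc_matMul (x y : ℕ → Matrix (Fin n) (Fin n) A) :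
    fdTrunc (D.matMul n x y) = firstOrderMul (D.matC n 1) (fdTrunc x) (fdTrunc y) :=
  fdTrunc_fdConv (D.matC_zero n) x y

end FormalDeformation

theorem first_order_term_of_corner_product_general {k A : Type*} [CommRing k] [Ring A]
    [Algebra k A]
    (D : FormalDeformation k A) (n : ℕ)
    (P₀ : Matrix (Fin n) (Fin n) A)
    (P : ℕ → Matrix (Fin n) (Fin n) A)
    (hP : D.matMul n P P = P) (hP0 : P 0 = P₀)
    (L S : Matrix (Fin n) (Fin n) A)
    (hL : P₀ * L * P₀ = L) (hS : P₀ * S * P₀ = S)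
    -- B = L •' S = I⁻¹(I(L) ⋆ I(S)): the unique corner series with I(B) = I(L) ⋆ I(S)
    (B : ℕ → Matrix (Fin n) (Fin n) A) (hB : ∀ m, P₀ * B m * P₀ = B m)
    (hBdef : D.matMul n (D.matMul n P B) P =
      D.matMul n (D.matMul n (D.matMul n P (fdC L)) P)
        (D.matMul n (D.matMul n P (fdC S)) P)) :
    B 1 = P₀ * D.matC n 1 L S * P₀ := by
  have hPtrunc : fdTrunc P = (P₀, P 1) := by rw [fdTrunc, hP0]
  have hPP := congrArg fdTrunc hP
  have h := congrArg fdTrunc hBdef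
  simp only [D.fdTrunc_matMul, hPtrunc, fdTrunc_fdC] at hPP h
  exact snd_eq_of_firstOrderMul_sandwich_eq (b := fdTrunc B) (D.matC_one_isHochschildCocycle n)
    hPP hL hS (hB 0) (hB 1) h

/-- For the deformation `•'` of `P₀Mₙ(A)P₀` transported via
`I(B) = P ⋆ B ⋆ P`, the first-order term is `B₁(L, S) = P₀ C₁(L, S) P₀`. -/
theorem first_order_term_of_corner_product {k A : Type*} [CommRing k] [Ring A]
    [Algebra k A]
    (D : FormalDeformation k A) (n : ℕ)
    (P₀ : Matrix (Fin n) (Fin n) A) (hP₀ : P₀ * P₀ = P₀)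
    (P : ℕ → Matrix (Fin n) (Fin n) A)
    (hP : D.matMul n P P = P) (hP0 : P 0 = P₀)
    (L S : Matrix (Fin n) (Fin n) A)
    (hL : P₀ * L * P₀ = L) (hS : P₀ * S * P₀ = S)
    -- B = L •' S = I⁻¹(I(L) ⋆ I(S)): the unique corner series with I(B) = I(L) ⋆ I(S)
    (B : ℕ → Matrix (Fin n) (Fin n) A) (hB : ∀ m, P₀ * B m * P₀ = B m)
    (hBdef : D.matMul n (D.matMul n P B) P =
      D.matMul n (D.matMul n (D.matMul n P (fdC L)) P)
        (D.matMul n (D.matMul n P (fdC S)) P)) :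
    B 1 = P₀ * D.matC n 1 L S * P₀ :=
  first_order_term_of_corner_product_general D n P₀ P hP hP0 L S hL hS B hB hBdef
end

section
/- Let k be a commutative unital ring in which 2 is invertible, A a commutative unital k-algebra, and qA = (A[[λ]], ⋆) a formal deformation of A whose first-order term C_1 is skew-symmetric (C_1(a,b) = −C_1(b,a)). Let P_0 ∈ M_n(A) be an idempotent. Define on matrices {L, S} := C_1(L,S) − C_1(S,L), where (C_1(L,S))_{ij} = Σ_r C_1(L_{ir}, S_{rj}), and on A the bracket {f, g} := C_1(f,g) − C_1(g,f). Then for all f, g ∈ A one has P_0 { f P_0, g P_0 } P_0 = { f, g } P_0; that is, the bracket induced on the center { f P_0 : f ∈ A } of P_0 M_n(A) P_0 by the transported deformation coincides with the original bracket on A under the identification f ↦ f P_0. -/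
open scoped Matrix

open scoped Matrix

/-!
Associativity of `⋆` at order `λ` says that `C₁` is a Hochschild 2-cocycle of `A`; on a
commutative algebra a skew-symmetric cocycle is, once `2` is invertible, a biderivation
(sum the cocycle identity over the cyclic permutations of its arguments). So
`{f L, g S}` splits by the Leibniz rule into terms `f (L δ_g(S) + δ_g(L) S)` and
`-g (L δ_f(S) + δ_f(L) S)`, with `δ_h = C₁(·, h)` applied entrywise, plus `{f, g} L S`.
For `L = S = P₀` the first two become `f δ_g(P₀)` and `-g δ_f(P₀)`, and `P₀ δ(P₀) P₀ = 0` for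
every derivation `δ`, since `δ(P₀) = P₀ δ(P₀) + δ(P₀) P₀`.
-/

theorem FormalDeformation.C_one_cocycle {k A : Type*} [CommRing k] [Ring A] [Algebra k A]
    (D : FormalDeformation k A) (a b c : A) :
    D.C 1 (a * b) c + D.C 1 a b * c = D.C 1 a (b * c) + a * D.C 1 b c := by
  have h := congrFun (D.assoc (fdC a) (fdC b) (fdC c)) 1
  simp only [fdConv, fdC, D.C_zero, map_sum, LinearMap.coe_sum, Finset.sum_apply,
    show Finset.HasAntidiagonal.antidiagonal (0 : ℕ) = {(0, 0)} from rfl,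
    show Finset.HasAntidiagonal.antidiagonal (1 : ℕ) = {(0, 1), (1, 0)} from rfl,
    Finset.mem_singleton, Prod.mk.injEq, zero_ne_one, one_ne_zero, and_self, not_false_eq_true,
    Finset.sum_insert, mul_ite, mul_zero, Finset.sum_ite_irrel, Finset.sum_const_zero, ↓reduceIte,
    Finset.sum_singleton, ite_mul, zero_mul, add_zero, zero_add] at h
  rw [add_comm, h, add_comm]

section SkewCocycle

variable {A : Type*} [CommRing A] {φ : A → A → A}

theorem leibniz_left_of_skew_of_cocycle (h2 : IsUnit (2 : A)) (hskew : ∀ a b, φ a b = -φ b a)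
    (hcocycle : ∀ a b c, φ (a * b) c + φ a b * c = φ a (b * c) + a * φ b c) (a b c : A) :
    φ (a * b) c = a * φ b c + b * φ a c := by
  refine h2.mul_left_cancel ?_
  linear_combination hcocycle a b c - hcocycle b c a + hcocycle c a b + hskew a (b * c)
    - hskew b (c * a) + hskew c (a * b) - 2 * b * hskew c a

theorem leibniz_right_of_skew (hskew : ∀ a b, φ a b = -φ b a)
    (hleft : ∀ a b c, φ (a * b) c = a * φ b c + b * φ a c) (a b c : A) :
    φ a (b * c) = b * φ a c + c * φ a b := by
  rw [hskew, hleft, hskew a c, hskew a b]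
  ring

theorem mul_mul_sub_mul_mul_of_skew_leibniz (hskew : ∀ a b, φ a b = -φ b a)
    (hleft : ∀ a b c, φ (a * b) c = a * φ b c + b * φ a c) (f g a b : A) :
    φ (f * a) (g * b) - φ (g * a) (f * b) =
      f * (a * φ b g + φ a g * b) - g * (a * φ b f + φ a f * b) + (φ f g - φ g f) * (a * b) := by
  have hright := leibniz_right_of_skew hskew hleft
  rw [hleft f, hleft g, hright a g, hright a f, hright f g, hright g f, hskew f b, hskew g b]
  ring

end SkewCocycle

theorem IsIdempotentElem.mul_mul_eq_zero_of_eq_mul_add_mul {R : Type*} [NonUnitalRing R]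
    {p x : R} (hp : IsIdempotentElem p) (hx : x = p * x + x * p) : p * x * p = 0 := by
  have h : p * x * p = p * p * x * p + p * x * (p * p) := by
    conv_lhs => rw [hx]
    simp only [mul_add, add_mul, mul_assoc]
  rw [hp.eq] at h
  exact left_eq_add.mp h

theorem Matrix.map_mul_of_leibniz {n R F : Type*} [Fintype n] [NonUnitalNonAssocSemiring R]
    [FunLike F R R] [AddMonoidHomClass F R R] (δ : F) (hδ : ∀ a b, δ (a * b) = δ a * b + a * δ b)
    (M N : Matrix n n R) : (M * N).map δ = M * N.map δ + M.map δ * N := by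
  ext i j
  simp only [Matrix.map_apply, Matrix.add_apply, Matrix.mul_apply, map_sum, hδ,
    Finset.sum_add_distrib, add_comm]

theorem FormalDeformation.matC_one_smul_sub_smul {k A : Type*} [CommRing k] [CommRing A]
    [Algebra k A] (D : FormalDeformation k A) (hskew : ∀ a b : A, D.C 1 a b = -D.C 1 b a)
    (hleft : ∀ a b c : A, D.C 1 (a * b) c = a * D.C 1 b c + b * D.C 1 a c) {n : ℕ}
    (L S : Matrix (Fin n) (Fin n) A) (f g : A) :
    D.matC n 1 (f • L) (g • S) - D.matC n 1 (g • L) (f • S) =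
      f • (L * S.map ((D.C 1).flip g) + L.map ((D.C 1).flip g) * S)
        - g • (L * S.map ((D.C 1).flip f) + L.map ((D.C 1).flip f) * S)
        + (D.C 1 f g - D.C 1 g f) • (L * S) := by
  ext i j
  simp only [FormalDeformation.matC, Matrix.sub_apply, Matrix.add_apply, Matrix.smul_apply,
    Matrix.mul_apply, Matrix.map_apply, Matrix.of_apply, LinearMap.flip_apply, smul_eq_mul,
    ← Finset.sum_sub_distrib, mul_mul_sub_mul_mul_of_skew_leibniz hskew hleft]
  simp only [mul_add, Finset.mul_sum, Finset.sum_add_distrib, Finset.sum_sub_distrib]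

/-- For a deformation of a commutative algebra with skew-symmetric
first-order term `C₁` and an idempotent `P₀ ∈ Mₙ(A)`, the bracket induced on the
center `{f P₀ : f ∈ A}` of `P₀Mₙ(A)P₀` coincides with the original bracket on `A`:
`P₀ {f P₀, g P₀} P₀ = {f, g} P₀`. -/
theorem center_bracket_coincides {k A : Type*} [CommRing k] [Invertible (2 : k)]
    [CommRing A] [Algebra k A]
    (D : FormalDeformation k A)
    (hskew : ∀ a b : A, D.C 1 a b = - D.C 1 b a)
    (n : ℕ) (P₀ : Matrix (Fin n) (Fin n) A) (hP₀ : P₀ * P₀ = P₀)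
    (f g : A) :
    P₀ * (D.matC n 1 (f • P₀) (g • P₀) - D.matC n 1 (g • P₀) (f • P₀)) * P₀ =
      (D.C 1 f g - D.C 1 g f) • P₀ := by
  have h2 : IsUnit (2 : A) := by
    simpa only [map_ofNat] using (isUnit_of_invertible (2 : k)).map (algebraMap k A)
  have hleft := leibniz_left_of_skew_of_cocycle h2 hskew D.C_one_cocycle
  have hsplit (h : A) : P₀.map ((D.C 1).flip h) =
      P₀ * P₀.map ((D.C 1).flip h) + P₀.map ((D.C 1).flip h) * P₀ := by
    conv_lhs => rw [← hP₀]
    refine Matrix.map_mul_of_leibniz _ (fun a b => ?_) P₀ P₀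
    simp only [LinearMap.flip_apply, hleft]
    ring
  have hP : IsIdempotentElem P₀ := hP₀
  rw [D.matC_one_smul_sub_smul hskew hleft, hP₀, ← hsplit, ← hsplit]
  simp only [Matrix.mul_add, Matrix.add_mul, Matrix.mul_sub, Matrix.sub_mul, Matrix.mul_smul,
    Matrix.smul_mul, hP.mul_mul_eq_zero_of_eq_mul_add_mul (hsplit _), hP₀, smul_zero, sub_self,
    zero_add]
end

section
/- Let C be a commutative star ring, A a unital *-algebra over C, and P_0 ∈ M_n(A) a strongly full projection with invertible τ ∈ A satisfying tr P_0 = (τ τ*)^{-1}. Identify the right A-linear endomorphism Θ_{x,y} of E = P_0 A^n (given by Θ_{x,y} z = x · h_0(y,z), with h_0(x,y) = Σ_i x_i* y_i) with the matrix x y* ∈ P_0 M_n(A) P_0 (x a column, y* the conjugate-transpose row). Then: (1) for every x ∈ E, the element Θ_{x,x} = x x* is algebraically positive in the *-algebra P_0 M_n(A) P_0, namely Θ_{x,x} = Σ_{i=1}^n T_i T_i* with T_i = x (P_0 e_i τ)* ∈ P_0 M_n(A) P_0; and (2) Θ is full: every element of P_0 M_n(A) P_0 is a finite sum of elements of the form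 x y* with x, y ∈ E. -/
open scoped Matrix

/-! With `vᵢ = P₀ eᵢ τ` one has `∑ᵢ vᵢ* vᵢ = τ* (tr P₀) τ = 1` (using `P₀² = P₀ = P₀*` and the
invertibility of `τ`), so `x x* = ∑ᵢ x (vᵢ* vᵢ) x* = ∑ᵢ (x vᵢ*)(x vᵢ*)*`; since `x` and `vᵢ` lie in the
range of `P₀`, so does each `x vᵢ*`. Fullness: `L = (P₀ L) P₀ = ∑ⱼ (P₀ L eⱼ)(P₀ eⱼ)*`, a sum of outer
products of vectors in the range of `P₀`, because the rows of `P₀` are the adjoints of its columns. -/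

namespace Matrix

variable {l m n A : Type*} [Fintype m]

theorem col_mul [NonUnitalNonAssocSemiring A] (M : Matrix l m A) (N : Matrix m n A) (j : n) :
    (M * N).col j = M *ᵥ N.col j :=
  rfl

theorem mul_eq_sum_vecMulVec_col_row [NonUnitalNonAssocSemiring A]
    (M : Matrix l m A) (N : Matrix m n A) : M * N = ∑ j, vecMulVec (M.col j) (N.row j) := by
  ext a b
  simp only [mul_apply, sum_apply, vecMulVec_apply, col_apply, row]

theorem vecMulVec_star_self_eq_sum_mul_conjTranspose [Semiring A] [StarRing A] {ι : Type*}
    [Fintype ι] (x : l → A) (v : ι → m → A) (hv : ∑ i, star (v i) ⬝ᵥ v i = 1) :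
    vecMulVec x (star x) = ∑ i, vecMulVec x (star (v i)) * (vecMulVec x (star (v i)))ᴴ := by
  simp only [conjTranspose_vecMulVec, star_star, vecMulVec_mul_vecMulVec]
  ext a b
  simp only [sum_apply, vecMulVec_apply, Pi.smul_apply, smul_eq_mul, ← Finset.mul_sum,
    ← Finset.sum_mul, hv, one_mul]

variable [Semiring A] {P : Matrix m m A}

theorem mulVec_mulVec_of_isIdempotentElem (hP : IsIdempotentElem P) (w : m → A) :
    P *ᵥ (P *ᵥ w) = P *ᵥ w := by
  rw [mulVec_mulVec, hP.eq]

variable [StarRing A]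

theorem star_vecMul_of_mulVec_eq (hP : P.IsHermitian) {u : m → A} (hu : P *ᵥ u = u) :
    star u ᵥ* P = star u := by
  conv_rhs => rw [← hu, star_mulVec, hP.eq]

theorem mul_vecMulVec_star_mul_of_mulVec_eq (hP : P.IsHermitian) {x y : m → A}
    (hx : P *ᵥ x = x) (hy : P *ᵥ y = y) : P * vecMulVec x (star y) * P = vecMulVec x (star y) := by
  rw [mul_vecMulVec, vecMulVec_mul, hx, star_vecMul_of_mulVec_eq hP hy]

theorem sum_star_dotProduct_mulVec_single [DecidableEq m] (hP : IsStarProjection P) (τ : A) :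
    ∑ i, star (P *ᵥ Pi.single i τ) ⬝ᵥ (P *ᵥ Pi.single i τ) = star τ * P.trace * τ := by
  have hdiag (i : m) : star (P *ᵥ Pi.single i τ) ⬝ᵥ (P *ᵥ Pi.single i τ) = star τ * P i i * τ := by
    rw [dotProduct_mulVec, star_vecMul_of_mulVec_eq hP.isSelfAdjoint.isHermitian
      (mulVec_mulVec_of_isIdempotentElem hP.isIdempotentElem _), dotProduct_single,
      Pi.star_apply, mulVec_single, Pi.smul_apply, col_apply, MulOpposite.smul_eq_mul_unop,
      MulOpposite.unop_op, star_mul, hP.isSelfAdjoint.isHermitian.apply]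
  simp only [hdiag, trace, diag, Finset.mul_sum, Finset.sum_mul]

theorem mem_closure_vecMulVec_star_of_mul_mul_eq (hP : IsStarProjection P) {L : Matrix m m A}
    (hL : P * L * P = L) :
    L ∈ AddSubmonoid.closure {M : Matrix m m A |
      ∃ x y : m → A, P *ᵥ x = x ∧ P *ᵥ y = y ∧ M = vecMulVec x (star y)} := by
  have hrow (j : m) : P.row j = star (P.col j) := by
    ext b
    exact (hP.isSelfAdjoint.isHermitian.apply j b).symm
  rw [← hL, mul_eq_sum_vecMulVec_col_row]
  refine AddSubmonoid.sum_mem _ fun j _ => AddSubmonoid.subset_closure ?_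
  refine ⟨(P * L).col j, P.col j, ?_, ?_, by rw [hrow]⟩
  · rw [col_mul, mulVec_mulVec_of_isIdempotentElem hP.isIdempotentElem]
  · rw [← col_mul, hP.isIdempotentElem.eq]

end Matrix

theorem star_mul_mul_eq_one_of_mul_mul_star_eq_one {R : Type*} [Monoid R] [StarMul R]
    {a τ σ : R} (hστ : σ * τ = 1) (ha : a * (τ * star τ) = 1) : star τ * a * τ = 1 := by
  have hστ' : star τ * star σ = 1 := by rw [← star_mul, hστ, star_one]
  calc star τ * a * τ = star τ * a * τ * (star τ * star σ) := by rw [hστ', mul_one]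
    _ = star τ * (a * (τ * star τ)) * star σ := by simp only [mul_assoc]
    _ = 1 := by rw [ha, mul_one, hστ']

theorem theta_positive_and_full_general {A : Type*} [Ring A] [StarRing A]
    (n : ℕ) (P₀ : Matrix (Fin n) (Fin n) A)
    (hP₀idem : P₀ * P₀ = P₀) (hP₀herm : P₀ᴴ = P₀)
    -- P₀ is strongly full: τ is invertible and tr P₀ = (τ τ*)⁻¹
    (τ σ : A) (hστ : σ * τ = 1)
    (htr : P₀.trace * (τ * star τ) = 1) :
    (∀ x : Fin n → A, P₀.mulVec x = x →
      (∀ i : Fin n, P₀ * Matrix.vecMulVec x (fun b => star (P₀ b i * τ)) * P₀ =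
        Matrix.vecMulVec x (fun b => star (P₀ b i * τ))) ∧
      Matrix.vecMulVec x (fun j => star (x j)) =
        ∑ i : Fin n, Matrix.vecMulVec x (fun b => star (P₀ b i * τ)) *
          (Matrix.vecMulVec x (fun b => star (P₀ b i * τ)))ᴴ) ∧
    (∀ L : Matrix (Fin n) (Fin n) A, P₀ * L * P₀ = L →
      L ∈ AddSubmonoid.closure {M : Matrix (Fin n) (Fin n) A |
        ∃ x y : Fin n → A, P₀.mulVec x = x ∧ P₀.mulVec y = y ∧
          M = Matrix.vecMulVec x fun j => star (y j)}) := by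
  have hP₀ : IsStarProjection P₀ := ⟨hP₀idem, hP₀herm⟩
  have hv (i : Fin n) : (fun b => star (P₀ b i * τ)) = star (P₀ *ᵥ Pi.single i τ) := by
    rw [Matrix.mulVec_single]
    rfl
  refine ⟨fun x hx => ⟨fun i => ?_, ?_⟩,
    fun L hL => Matrix.mem_closure_vecMulVec_star_of_mul_mul_eq hP₀ hL⟩
  · rw [hv]
    exact Matrix.mul_vecMulVec_star_mul_of_mulVec_eq hP₀herm hx
      (Matrix.mulVec_mulVec_of_isIdempotentElem hP₀idem _)
  · simp only [hv]
    refine Matrix.vecMulVec_star_self_eq_sum_mul_conjTranspose x _ ?_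
    rw [Matrix.sum_star_dotProduct_mulVec_single hP₀,
      star_mul_mul_eq_one_of_mul_mul_star_eq_one hστ htr]

/-- positivity and fullness of `Θ` in Theorem 4.1. Identifying
`Θ_{x,y}` with the matrix `x y* ∈ P₀Mₙ(A)P₀`: (1) each `Θ_{x,x}` is a sum
`∑ᵢ Tᵢ Tᵢ*` with `Tᵢ = x (P₀eᵢτ)* ∈ P₀Mₙ(A)P₀`, hence algebraically positive;
(2) every element of `P₀Mₙ(A)P₀` is a finite sum of elements `x y*` with
`x, y ∈ E = P₀Aⁿ`. -/
theorem theta_positive_and_full {C A : Type*} [CommRing C] [StarRing C]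
    [Ring A] [Algebra C A] [StarRing A] [StarModule C A]
    (n : ℕ) (P₀ : Matrix (Fin n) (Fin n) A)
    (hP₀idem : P₀ * P₀ = P₀) (hP₀herm : P₀ᴴ = P₀)
    -- P₀ is strongly full: τ is invertible and tr P₀ = (τ τ*)⁻¹
    (τ σ : A) (hτσ : τ * σ = 1) (hστ : σ * τ = 1)
    (htr : P₀.trace * (τ * star τ) = 1) (htr' : (τ * star τ) * P₀.trace = 1) :
    (∀ x : Fin n → A, P₀.mulVec x = x →
      (∀ i : Fin n, P₀ * Matrix.vecMulVec x (fun b => star (P₀ b i * τ)) * P₀ =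
        Matrix.vecMulVec x (fun b => star (P₀ b i * τ))) ∧
      Matrix.vecMulVec x (fun j => star (x j)) =
        ∑ i : Fin n, Matrix.vecMulVec x (fun b => star (P₀ b i * τ)) *
          (Matrix.vecMulVec x (fun b => star (P₀ b i * τ)))ᴴ) ∧
    (∀ L : Matrix (Fin n) (Fin n) A, P₀ * L * P₀ = L →
      L ∈ AddSubmonoid.closure {M : Matrix (Fin n) (Fin n) A |
        ∃ x y : Fin n → A, P₀.mulVec x = x ∧ P₀.mulVec y = y ∧
          M = Matrix.vecMulVec x fun j => star (y j)}) :=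
  theta_positive_and_full_general n P₀ hP₀idem hP₀herm τ σ hστ htr
end

section
/- Let C be a commutative star ring, A a unital *-algebra over C, qA = (A[[λ]], ⋆) a Hermitian formal deformation of A, P_0 ∈ M_n(A) a projection, and P ∈ M_n(A)[[λ]] a projection (P ⋆ P = P, P* = P) deforming P_0. Let qE = P ⋆ A^n[[λ]] = { P ⋆ x : x ∈ A^n[[λ]] } be the right qA-module with action x ⋆ a (entrywise ⋆), and let h(x, y) = Σ_{i=1}^n x_i* ⋆ y_i be its canonical qA-valued inner product. Then every C[[λ]]-additive map h' : qE × qE → A[[λ]] satisfying h'(x, y)* = h'(y, x) and h'(x, y ⋆ a) = h'(x, y) ⋆ a for all x, y ∈ qE, a ∈ A[[λ]], is of the form h'(x, y) = h(x, H y) for some right qA-linear endomorphism H of qE which is Hermitian with respect to h, i.e. h(H x, y) = h(x, H y) for all x, y ∈ qE. -/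
open scoped Matrix

/-- The canonical `qA`-valued inner product `h(x, y) = ∑ᵢ xᵢ* ⋆ yᵢ` on series of
column vectors in `A^n[[λ]]`. -/
def canonicalInner {C A : Type*} [CommRing C] [Ring A] [Algebra C A] [StarRing A]
    (D : FormalDeformation C A) (n : ℕ) (x y : ℕ → Fin n → A) : ℕ → A :=
  ∑ i : Fin n, D.mul (fdStar fun m => x m i) fun m => y m i

/-!
The columns `Pⱼ` of `P` lie in `qE` and span it: `x = ∑ⱼ Pⱼ ⋆ xⱼ` whenever `P ⋆ x = x`.
Hermitian symmetry and right linearity of `h'` then give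
`h'(x, y) = h'(y, x)* = ∑ⱼ xⱼ* ⋆ h'(Pⱼ, y)`, i.e. `h'(x, y) = h(x, H y)` with
`(H y)ᵢ = h'(Pᵢ, y)`. Since `P* = P` we have `h(Pᵢ, z) = (P ⋆ z)ᵢ`, so the representation at
`x = Pᵢ` says `P ⋆ H y = H y`; and `h(H x, y) = h(y, H x)* = h'(y, x)* = h'(x, y) = h(x, H y)`.
-/

theorem Finset.map_sum_of_map_add {ι M N : Type*} [AddCommMonoid M] [AddCommGroup N]
    (S : AddSubmonoid M) {f : M → N} (hf : ∀ x ∈ S, ∀ y ∈ S, f (x + y) = f x + f y)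
    {s : Finset ι} {g : ι → M} (hg : ∀ i ∈ s, g i ∈ S) :
    f (∑ i ∈ s, g i) = ∑ i ∈ s, f (g i) := by
  induction s using Finset.cons_induction with
  | empty => simpa using hf 0 S.zero_mem 0 S.zero_mem
  | cons a s ha ih =>
    have hs : ∀ i ∈ s, g i ∈ S := fun i hi => hg i (Finset.mem_cons_of_mem hi)
    rw [Finset.sum_cons, Finset.sum_cons, hf _ (hg a (Finset.mem_cons_self a s)) _
      (S.sum_mem hs), ih hs]

section Coordinates

variable {B : Type*} {n : ℕ}

def fdCoord (v : ℕ → Fin n → B) (i : Fin n) : ℕ → B := fun m => v m i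

def fdEntry (P : ℕ → Matrix (Fin n) (Fin n) B) (i j : Fin n) : ℕ → B := fun m => P m i j

def fdCol (P : ℕ → Matrix (Fin n) (Fin n) B) (j : Fin n) : ℕ → Fin n → B :=
  fun m i => P m i j

@[simp]
theorem fdCoord_fdCol (P : ℕ → Matrix (Fin n) (Fin n) B) (i j : Fin n) :
    fdCoord (fdCol P j) i = fdEntry P i j := rfl

theorem fdCoord_injective : Function.Injective (fdCoord (B := B) (n := n)) :=
  fun _ _ h => funext fun m => funext fun i => congrFun (congrFun h i) m

theorem fdCoord_ext {v w : ℕ → Fin n → B} (h : ∀ i, fdCoord v i = fdCoord w i) : v = w :=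
  fdCoord_injective (funext h)

theorem fdCoord_sum [AddCommMonoid B] {ι : Type*} (s : Finset ι) (f : ι → ℕ → Fin n → B)
    (i : Fin n) : fdCoord (∑ j ∈ s, f j) i = ∑ j ∈ s, fdCoord (f j) i := by
  funext m
  simp [fdCoord, Finset.sum_apply]

theorem fdStar_sum [AddCommMonoid B] [StarAddMonoid B] {ι : Type*} (s : Finset ι)
    (f : ι → ℕ → B) : fdStar (∑ j ∈ s, f j) = ∑ j ∈ s, fdStar (f j) := by
  funext m
  simp [fdStar, Finset.sum_apply]

theorem fdStar_fdStar [InvolutiveStar B] (x : ℕ → B) : fdStar (fdStar x) = x :=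
  funext fun _ => star_star _

theorem fdStar_fdEntry_of_conjTranspose [Star B] {P : ℕ → Matrix (Fin n) (Fin n) B}
    (hP : ∀ m, (P m)ᴴ = P m) (i j : Fin n) : fdStar (fdEntry P i j) = fdEntry P j i :=
  funext fun m => by simpa [fdStar, fdEntry] using congrFun (congrFun (hP m) j) i

def representingOperator (P : ℕ → Matrix (Fin n) (Fin n) B)
    (h' : (ℕ → Fin n → B) → (ℕ → Fin n → B) → ℕ → B) (y : ℕ → Fin n → B) :
    ℕ → Fin n → B :=
  fun m i => h' (fdCol P i) y m

end Coordinates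

namespace FormalDeformation

variable {k A : Type*} [CommRing k] [Ring A] [Algebra k A] (D : FormalDeformation k A)
  {n : ℕ}

protected theorem mul_assoc (x y z : ℕ → A) : D.mul (D.mul x y) z = D.mul x (D.mul y z) :=
  D.assoc x y z

protected theorem add_mul (x y z : ℕ → A) : D.mul (x + y) z = D.mul x z + D.mul y z := by
  funext m
  simp [mul, fdConv, Finset.sum_add_distrib]

protected theorem sum_mul {ι : Type*} (s : Finset ι) (f : ι → ℕ → A) (x : ℕ → A) :
    D.mul (∑ j ∈ s, f j) x = ∑ j ∈ s, D.mul (f j) x := by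
  induction s using Finset.cons_induction with
  | empty => funext m; simp [mul, fdConv]
  | cons a s ha ih => rw [Finset.sum_cons, Finset.sum_cons, D.add_mul, ih]

theorem fdCoord_mvMul (P : ℕ → Matrix (Fin n) (Fin n) A) (v : ℕ → Fin n → A) (i : Fin n) :
    fdCoord (D.mvMul n P v) i = ∑ j, D.mul (fdEntry P i j) (fdCoord v j) := by
  funext m
  simp only [fdCoord, fdEntry, mvMul, mul, fdConv, Finset.sum_apply]
  exact (Finset.sum_congr rfl fun _ _ => Finset.sum_comm).trans Finset.sum_comm

theorem fdCoord_vsMul (v : ℕ → Fin n → A) (a : ℕ → A) (i : Fin n) :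
    fdCoord (D.vsMul n v a) i = D.mul (fdCoord v i) a := by
  funext m
  simp [fdCoord, vsMul, mul, fdConv, Finset.sum_apply]

theorem fdEntry_matMul (L S : ℕ → Matrix (Fin n) (Fin n) A) (i j : Fin n) :
    fdEntry (D.matMul n L S) i j = ∑ s, D.mul (fdEntry L i s) (fdEntry S s j) := by
  funext m
  simp only [fdEntry, matMul, matC, mul, fdConv, Finset.sum_apply, Matrix.sum_apply,
    Matrix.of_apply]
  exact (Finset.sum_congr rfl fun _ _ => Finset.sum_comm).trans Finset.sum_comm

theorem mvMul_add (P : ℕ → Matrix (Fin n) (Fin n) A) (x y : ℕ → Fin n → A) :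
    D.mvMul n P (x + y) = D.mvMul n P x + D.mvMul n P y := by
  funext m i
  simp [mvMul, fdConv, Finset.sum_apply, Finset.sum_add_distrib]

theorem mvMul_vsMul (P : ℕ → Matrix (Fin n) (Fin n) A) (v : ℕ → Fin n → A) (a : ℕ → A) :
    D.mvMul n P (D.vsMul n v a) = D.vsMul n (D.mvMul n P v) a := by
  refine fdCoord_ext fun i => ?_
  simp only [fdCoord_mvMul, fdCoord_vsMul, D.sum_mul, D.mul_assoc]

/-- `qE = P ⋆ Aⁿ[[λ]]`, taken as the fixed points of `P ⋆ ·` (its range when `P` is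
idempotent). -/
def fixedVectors (n : ℕ) (P : ℕ → Matrix (Fin n) (Fin n) A) : AddSubmonoid (ℕ → Fin n → A)
    where
  carrier := {x | D.mvMul n P x = x}
  add_mem' {x y} hx hy := by simp_all [mvMul_add]
  zero_mem' := by funext m i; simp [mvMul, fdConv]

theorem fdCol_mem_fixedVectors {P : ℕ → Matrix (Fin n) (Fin n) A} (hP : D.matMul n P P = P)
    (j : Fin n) : fdCol P j ∈ D.fixedVectors n P := by
  refine fdCoord_ext fun i => ?_
  simp only [fdCoord_mvMul, fdCoord_fdCol]
  rw [← fdEntry_matMul, hP]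

theorem vsMul_mem_fixedVectors {P : ℕ → Matrix (Fin n) (Fin n) A} {v : ℕ → Fin n → A}
    (hv : v ∈ D.fixedVectors n P) (a : ℕ → A) : D.vsMul n v a ∈ D.fixedVectors n P := by
  change D.mvMul n P _ = _
  rw [mvMul_vsMul, hv]

theorem eq_sum_vsMul_fdCol {P : ℕ → Matrix (Fin n) (Fin n) A} {x : ℕ → Fin n → A}
    (hx : x ∈ D.fixedVectors n P) : x = ∑ j, D.vsMul n (fdCol P j) (fdCoord x j) := by
  refine fdCoord_ext fun i => ?_
  conv_lhs => rw [← show D.mvMul n P x = x from hx]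
  simp only [fdCoord_mvMul, fdCoord_sum, fdCoord_vsMul, fdCoord_fdCol]

section Hermitian

variable [StarRing A] {D}

theorem fdStar_canonicalInner (hD : D.IsHermitian) (v w : ℕ → Fin n → A) :
    fdStar (canonicalInner D n v w) = canonicalInner D n w v := by
  unfold canonicalInner
  rw [fdStar_sum]
  exact Finset.sum_congr rfl fun i _ => by rw [hD, fdStar_fdStar]

theorem canonicalInner_fdCol {P : ℕ → Matrix (Fin n) (Fin n) A} (hP : ∀ m, (P m)ᴴ = P m)
    (i : Fin n) (v : ℕ → Fin n → A) :
    canonicalInner D n (fdCol P i) v = fdCoord (D.mvMul n P v) i := by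
  rw [fdCoord_mvMul]
  exact Finset.sum_congr rfl fun j _ => by
    rw [← fdStar_fdEntry_of_conjTranspose hP]
    rfl

variable (D) (n) in
structure IsHermitianForm (P : ℕ → Matrix (Fin n) (Fin n) A)
    (h' : (ℕ → Fin n → A) → (ℕ → Fin n → A) → ℕ → A) : Prop where
  add_right : ∀ x y y', x ∈ D.fixedVectors n P → y ∈ D.fixedVectors n P →
    y' ∈ D.fixedVectors n P → h' x (y + y') = h' x y + h' x y'
  star_apply : ∀ x y, x ∈ D.fixedVectors n P → y ∈ D.fixedVectors n P →
    fdStar (h' x y) = h' y x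
  apply_vsMul : ∀ x y (a : ℕ → A), x ∈ D.fixedVectors n P → y ∈ D.fixedVectors n P →
    h' x (D.vsMul n y a) = D.mul (h' x y) a

variable {P : ℕ → Matrix (Fin n) (Fin n) A} {h' : (ℕ → Fin n → A) → (ℕ → Fin n → A) → ℕ → A}

namespace IsHermitianForm

theorem eq_canonicalInner_representingOperator (hD : D.IsHermitian)
    (hP : D.matMul n P P = P) (hh' : IsHermitianForm D n P h') {x y : ℕ → Fin n → A}
    (hx : x ∈ D.fixedVectors n P) (hy : y ∈ D.fixedVectors n P) :
    h' x y = canonicalInner D n x (representingOperator P h' y) := by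
  have hcol := D.fdCol_mem_fixedVectors hP
  calc h' x y = fdStar (h' y x) := (hh'.star_apply y x hy hx).symm
    _ = fdStar (h' y (∑ j, D.vsMul n (fdCol P j) (fdCoord x j))) := by
      rw [← D.eq_sum_vsMul_fdCol hx]
    _ = ∑ j, fdStar (D.mul (h' y (fdCol P j)) (fdCoord x j)) := by
      rw [Finset.map_sum_of_map_add _ (fun z hz z' hz' => hh'.add_right y z z' hy hz hz')
        fun j _ => D.vsMul_mem_fixedVectors (hcol j) _, fdStar_sum]
      exact Finset.sum_congr rfl fun j _ => by rw [hh'.apply_vsMul y _ _ hy (hcol j)]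
    _ = canonicalInner D n x (representingOperator P h' y) :=
      Finset.sum_congr rfl fun j _ => by rw [hD, hh'.star_apply y _ hy (hcol j)]; rfl

theorem representingOperator_mem (hD : D.IsHermitian) (hP : D.matMul n P P = P)
    (hPherm : ∀ m, (P m)ᴴ = P m) (hh' : IsHermitianForm D n P h') {y : ℕ → Fin n → A}
    (hy : y ∈ D.fixedVectors n P) : representingOperator P h' y ∈ D.fixedVectors n P := by
  refine fdCoord_ext fun i => ?_
  rw [← canonicalInner_fdCol hPherm,
    ← hh'.eq_canonicalInner_representingOperator hD hP (D.fdCol_mem_fixedVectors hP i) hy]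
  rfl

theorem representingOperator_add (hP : D.matMul n P P = P) (hh' : IsHermitianForm D n P h')
    {y y' : ℕ → Fin n → A} (hy : y ∈ D.fixedVectors n P) (hy' : y' ∈ D.fixedVectors n P) :
    representingOperator P h' (y + y') =
      representingOperator P h' y + representingOperator P h' y' :=
  funext fun m => funext fun i =>
    congrFun (hh'.add_right _ y y' (D.fdCol_mem_fixedVectors hP i) hy hy') m

theorem representingOperator_vsMul (hP : D.matMul n P P = P) (hh' : IsHermitianForm D n P h')
    {y : ℕ → Fin n → A} (hy : y ∈ D.fixedVectors n P) (a : ℕ → A) :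
    representingOperator P h' (D.vsMul n y a) = D.vsMul n (representingOperator P h' y) a :=
  fdCoord_ext fun i => by
    rw [fdCoord_vsMul]
    exact hh'.apply_vsMul _ y a (D.fdCol_mem_fixedVectors hP i) hy

theorem canonicalInner_representingOperator_comm (hD : D.IsHermitian)
    (hP : D.matMul n P P = P) (hh' : IsHermitianForm D n P h') {x y : ℕ → Fin n → A}
    (hx : x ∈ D.fixedVectors n P) (hy : y ∈ D.fixedVectors n P) :
    canonicalInner D n (representingOperator P h' x) y =
      canonicalInner D n x (representingOperator P h' y) :=
  calc canonicalInner D n (representingOperator P h' x) y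
      = fdStar (canonicalInner D n y (representingOperator P h' x)) :=
        (fdStar_canonicalInner hD _ _).symm
    _ = fdStar (h' y x) := by rw [hh'.eq_canonicalInner_representingOperator hD hP hy hx]
    _ = h' x y := hh'.star_apply y x hy hx
    _ = canonicalInner D n x (representingOperator P h' y) :=
        hh'.eq_canonicalInner_representingOperator hD hP hx hy

end IsHermitianForm

end Hermitian

end FormalDeformation

theorem sesquilinear_form_via_hermitian_operator_general {C A : Type*} [CommRing C]
    [Ring A] [Algebra C A] [StarRing A]
    (D : FormalDeformation C A) (hD : D.IsHermitian) (n : ℕ)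
    -- P is a projection of Mₙ(qA) deforming P₀
    (P : ℕ → Matrix (Fin n) (Fin n) A)
    (hPidem : D.matMul n P P = P) (hPherm : ∀ m, (P m)ᴴ = P m)
    -- h' is a C[[λ]]-additive, Hermitian-symmetric, right qA-linear map on qE
    (h' : (ℕ → Fin n → A) → (ℕ → Fin n → A) → ℕ → A)
    (h'_add_right : ∀ x y y', D.mvMul n P x = x → D.mvMul n P y = y →
      D.mvMul n P y' = y' → h' x (y + y') = h' x y + h' x y')
    (h'_herm : ∀ x y, D.mvMul n P x = x → D.mvMul n P y = y →
      fdStar (h' x y) = h' y x)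
    (h'_mod : ∀ x y (a : ℕ → A), D.mvMul n P x = x → D.mvMul n P y = y →
      h' x (D.vsMul n y a) = D.mul (h' x y) a) :
    ∃ H : (ℕ → Fin n → A) → ℕ → Fin n → A,
      -- H is an endomorphism of qE
      (∀ x, D.mvMul n P x = x → D.mvMul n P (H x) = H x) ∧
      (∀ x x', D.mvMul n P x = x → D.mvMul n P x' = x' → H (x + x') = H x + H x') ∧
      -- H is right qA-linear
      (∀ x (a : ℕ → A), D.mvMul n P x = x → H (D.vsMul n x a) = D.vsMul n (H x) a) ∧
      -- H is Hermitian with respect to the canonical inner product h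
      (∀ x y, D.mvMul n P x = x → D.mvMul n P y = y →
        canonicalInner D n (H x) y = canonicalInner D n x (H y)) ∧
      -- h' is represented by H
      (∀ x y, D.mvMul n P x = x → D.mvMul n P y = y →
        h' x y = canonicalInner D n x (H y)) := by
  have hh' : D.IsHermitianForm n P h' := ⟨h'_add_right, h'_herm, h'_mod⟩
  exact ⟨representingOperator P h',
    fun _ hx => hh'.representingOperator_mem hD hPidem hPherm hx,
    fun _ _ hx hx' => hh'.representingOperator_add hPidem hx hx',
    fun _ a hx => hh'.representingOperator_vsMul hPidem hx a,
    fun _ _ hx hy => hh'.canonicalInner_representingOperator_comm hD hPidem hx hy,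
    fun _ _ hx hy => hh'.eq_canonicalInner_representingOperator hD hPidem hx hy⟩

/-- On `qE = P ⋆ Aⁿ[[λ]] = {x : P ⋆ x = x}`, every
`C[[λ]]`-additive map `h'` which is Hermitian-symmetric and right `qA`-linear is
of the form `h'(x,y) = h(x, H y)` for some right `qA`-linear endomorphism `H` of
`qE` which is Hermitian with respect to the canonical inner product `h`. -/
theorem sesquilinear_form_via_hermitian_operator {C A : Type*} [CommRing C]
    [StarRing C] [Ring A] [Algebra C A] [StarRing A] [StarModule C A]
    (D : FormalDeformation C A) (hD : D.IsHermitian) (n : ℕ)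
    (P₀ : Matrix (Fin n) (Fin n) A)
    (hP₀idem : P₀ * P₀ = P₀) (hP₀herm : P₀ᴴ = P₀)
    -- P is a projection of Mₙ(qA) deforming P₀
    (P : ℕ → Matrix (Fin n) (Fin n) A)
    (hPidem : D.matMul n P P = P) (hPherm : ∀ m, (P m)ᴴ = P m) (hP0 : P 0 = P₀)
    -- h' is a C[[λ]]-additive, Hermitian-symmetric, right qA-linear map on qE
    (h' : (ℕ → Fin n → A) → (ℕ → Fin n → A) → ℕ → A)
    (h'_add_left : ∀ x x' y, D.mvMul n P x = x → D.mvMul n P x' = x' →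
      D.mvMul n P y = y → h' (x + x') y = h' x y + h' x' y)
    (h'_add_right : ∀ x y y', D.mvMul n P x = x → D.mvMul n P y = y →
      D.mvMul n P y' = y' → h' x (y + y') = h' x y + h' x y')
    (h'_herm : ∀ x y, D.mvMul n P x = x → D.mvMul n P y = y →
      fdStar (h' x y) = h' y x)
    (h'_mod : ∀ x y (a : ℕ → A), D.mvMul n P x = x → D.mvMul n P y = y →
      h' x (D.vsMul n y a) = D.mul (h' x y) a) :
    ∃ H : (ℕ → Fin n → A) → ℕ → Fin n → A,
      -- H is an endomorphism of qE
      (∀ x, D.mvMul n P x = x → D.mvMul n P (H x) = H x) ∧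
      (∀ x x', D.mvMul n P x = x → D.mvMul n P x' = x' → H (x + x') = H x + H x') ∧
      -- H is right qA-linear
      (∀ x (a : ℕ → A), D.mvMul n P x = x → H (D.vsMul n x a) = D.vsMul n (H x) a) ∧
      -- H is Hermitian with respect to the canonical inner product h
      (∀ x y, D.mvMul n P x = x → D.mvMul n P y = y →
        canonicalInner D n (H x) y = canonicalInner D n x (H y)) ∧
      -- h' is represented by H
      (∀ x y, D.mvMul n P x = x → D.mvMul n P y = y →
        h' x y = canonicalInner D n x (H y)) :=
  sesquilinear_form_via_hermitian_operator_general D hD n P hPidem hPherm h' h'_add_right h'_herm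
    h'_mod
end
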